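/- arXiv:2312.08121 — 5 statements merged into one kernel-verified Lean document; each statement's English description precedes it below -/
import Mathlib

section
/- Suppose E[X_0] = 0. Then almost surely the following hold simultaneously: (i) for every i ∈ ℤ and every n ≥ 0, R_X^{n+1}(i) > R_X^n(i) (every integer has infinitely many ancestors in the record graph); (ii) for all i, j ∈ ℤ there exist n, m ≥ 0 with R_X^n(i) = R_X^m(j) (the record graph is connected); (iii) for every i ∈ ℤ the set of descendants {j < i : R_X^m(j) = i for some m ≥ 1} is finite. -/
attribute [local instance] Classical.propDecidable

/-- The record map of an integer sequence: `n` is sent to the least integer `j > n`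
with `∑_{l=n}^{j-1} x l ≥ 0` if such `j` exists, and to `n` otherwise. -/
noncomputable def recordMap (x : ℤ → ℤ) (n : ℤ) : ℤ :=
  if ∃ j : ℤ, n < j ∧ 0 ≤ ∑ l ∈ Finset.Ico n j, x l then
    sInf {j : ℤ | n < j ∧ 0 ≤ ∑ l ∈ Finset.Ico n j, x l}
  else n

open MeasureTheory ProbabilityTheory


open Filter Topology

namespace RecordAux

variable (x : ℤ → ℤ)


lemma sum_Ico_consec {a b c : ℤ} (h1 : a ≤ b) (h2 : b ≤ c) :
    ∑ l ∈ Finset.Ico a b, x l + ∑ l ∈ Finset.Ico b c, x l = ∑ l ∈ Finset.Ico a c, x l := by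
  rw [← Finset.sum_union (Finset.Ico_disjoint_Ico_consecutive a b c),
    Finset.Ico_union_Ico_eq_Ico h1 h2]

/-- An antiderivative of `x` : `SS x b - SS x a = ∑ l ∈ Ico a b, x l` for `a ≤ b`. -/
noncomputable def SS (m : ℤ) : ℤ := (∑ l ∈ Finset.Ico 0 m, x l) - (∑ l ∈ Finset.Ico m 0, x l)

lemma sum_Ico_eq {a b : ℤ} (hab : a ≤ b) :
    ∑ l ∈ Finset.Ico a b, x l = SS x b - SS x a := by
  rcases le_total 0 a with h0a | ha0
  · have h1 := sum_Ico_consec x h0a hab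
    have e1 : Finset.Ico a 0 = ∅ := Finset.Ico_eq_empty (by omega)
    have e2 : Finset.Ico b 0 = ∅ := Finset.Ico_eq_empty (by omega)
    simp only [SS, e1, e2, Finset.sum_empty]
    omega
  · rcases le_total b 0 with hb0 | h0b
    · have h1 := sum_Ico_consec x hab hb0
      have e1 : Finset.Ico 0 a = ∅ := Finset.Ico_eq_empty (by omega)
      have e2 : Finset.Ico 0 b = ∅ := Finset.Ico_eq_empty (by omega)
      simp only [SS, e1, e2, Finset.sum_empty]
      omega
    · have h1 := sum_Ico_consec x ha0 h0b
      have e1 : Finset.Ico 0 a = ∅ := Finset.Ico_eq_empty (by omega)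
      have e2 : Finset.Ico b 0 = ∅ := Finset.Ico_eq_empty (by omega)
      simp only [SS, e1, e2, Finset.sum_empty]
      omega

/-- Forward condition: from every `n` there is a later nonnegative window. -/
def Hfwd : Prop := ∀ n : ℤ, ∃ j : ℤ, n < j ∧ 0 ≤ ∑ l ∈ Finset.Ico n j, x l

/-- Backward condition: before every `n` there is a negative window ending at `n`. -/
def Hbwd : Prop := ∀ n : ℤ, ∃ l : ℤ, l < n ∧ ∑ l' ∈ Finset.Ico l n, x l' < 0

variable {x}

lemma record_spec (hf : Hfwd x) (n : ℤ) :
    n < recordMap x n ∧ SS x n ≤ SS x (recordMap x n) ∧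
      ∀ j, n < j → SS x n ≤ SS x j → recordMap x n ≤ j := by
  set T : Set ℤ := {j : ℤ | n < j ∧ 0 ≤ ∑ l ∈ Finset.Ico n j, x l} with hT
  have hne : T.Nonempty := hf n
  have hbdd : BddBelow T := ⟨n, fun j hj => hj.1.le⟩
  have hmem : sInf T ∈ T := Int.csInf_mem hne hbdd
  have hrec : recordMap x n = sInf T := if_pos (hf n)
  refine ⟨by rw [hrec]; exact hmem.1, ?_, ?_⟩
  · rw [hrec]
    have h2 := hmem.2
    rw [sum_Ico_eq x hmem.1.le] at h2
    omega
  · intro j hj1 hj2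
    rw [hrec]
    exact csInf_le hbdd ⟨hj1, by rw [sum_Ico_eq x hj1.le]; omega⟩

lemma record_gt (hf : Hfwd x) (n : ℤ) : n < recordMap x n := (record_spec hf n).1

lemma record_S (hf : Hfwd x) (n : ℤ) : SS x n ≤ SS x (recordMap x n) :=
  (record_spec hf n).2.1

lemma record_lt_S (hf : Hfwd x) {n j : ℤ} (h1 : n < j) (h2 : j < recordMap x n) :
    SS x j < SS x n := by
  by_contra h
  exact absurd ((record_spec hf n).2.2 j h1 (by omega)) (by omega)

lemma iterate_prop (hf : Hfwd x) (i : ℤ) (k : ℕ) :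
    i ≤ (recordMap x)^[k] i ∧
      ∀ l, i ≤ l → l < (recordMap x)^[k] i → SS x l ≤ SS x ((recordMap x)^[k] i) := by
  induction k with
  | zero => exact ⟨le_rfl, fun l h1 h2 => absurd h2 (by simp; omega)⟩
  | succ k ih =>
    rw [Function.iterate_succ_apply']
    set t := (recordMap x)^[k] i with ht
    refine ⟨ih.1.trans (record_gt hf t).le, fun l h1 h2 => ?_⟩
    rcases lt_trichotomy l t with h | h | h
    · exact (ih.2 l h1 h).trans (record_S hf t)
    · rw [h]; exact record_S hf t
    · exact (record_lt_S hf h h2).le.trans (record_S hf t)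

lemma orbit_of (hf : Hfwd x) (d : ℕ) :
    ∀ j m : ℤ, j ≤ m → (m - j).toNat = d → (∀ l, j ≤ l → l < m → SS x l ≤ SS x m) →
      ∃ k : ℕ, (recordMap x)^[k] j = m := by
  induction d using Nat.strong_induction_on with
  | _ d IH =>
    intro j m hjm hd hrec
    rcases eq_or_lt_of_le hjm with heq | hlt
    · exact ⟨0, heq⟩
    · set t := recordMap x j with htdef
      have hjt : j < t := record_gt hf j
      have htm : t ≤ m := (record_spec hf j).2.2 m hlt (hrec j le_rfl hlt)
      obtain ⟨k, hk⟩ := IH (m - t).toNat (by omega) t m htm rfl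
        (fun l h1 h2 => hrec l (by omega) h2)
      exact ⟨k + 1, by rw [Function.iterate_succ_apply]; exact hk⟩

lemma le_iterate (hf : Hfwd x) (i : ℤ) (k : ℕ) : i + k ≤ (recordMap x)^[k] i := by
  induction k with
  | zero => simp
  | succ k ih =>
    rw [Function.iterate_succ_apply']
    have := record_gt hf ((recordMap x)^[k] i)
    push_cast
    omega

theorem det_main (hf : Hfwd x) (hb : Hbwd x) :
    (∀ i : ℤ, ∀ n : ℕ, (recordMap x)^[n] i < (recordMap x)^[n + 1] i) ∧
      (∀ i j : ℤ, ∃ n m : ℕ, (recordMap x)^[n] i = (recordMap x)^[m] j) ∧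
      (∀ i : ℤ, {j : ℤ | j < i ∧ ∃ m : ℕ, 1 ≤ m ∧ (recordMap x)^[m] j = i}.Finite) := by
  refine ⟨?_, ?_, ?_⟩
  · intro i n
    rw [Function.iterate_succ_apply']
    exact record_gt hf _
  · intro i j
    set a := min i j with ha
    set b := max i j with hb
    have hab : a ≤ b := min_le_max
    obtain ⟨l₀, hl₀mem, hl₀max⟩ := Finset.exists_max_image (Finset.Icc a b) (SS x)
      ⟨a, Finset.mem_Icc.2 ⟨le_rfl, hab⟩⟩
    rw [Finset.mem_Icc] at hl₀mem
    set k := (b - l₀).toNat with hk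
    set t := (recordMap x)^[k] l₀ with htdef
    have hbt : b ≤ t := by
      have := le_iterate hf l₀ k
      omega
    have hl₀t : l₀ ≤ t := hl₀mem.2.trans hbt
    have hSl₀t : SS x l₀ ≤ SS x t := by
      rcases eq_or_lt_of_le hl₀t with heq | hlt
      · rw [heq]
      · exact (iterate_prop hf l₀ k).2 l₀ le_rfl hlt
    have key : ∀ c, a ≤ c → c ≤ b → ∃ kk : ℕ, (recordMap x)^[kk] c = t := by
      intro c hac hcb
      refine orbit_of hf (t - c).toNat c t (hcb.trans hbt) rfl ?_
      intro l h1 h2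
      rcases le_or_gt l b with hlb | hbl
      · exact (hl₀max l (Finset.mem_Icc.2 ⟨hac.trans h1, hlb⟩)).trans hSl₀t
      · exact (iterate_prop hf l₀ k).2 l (by omega) h2
    obtain ⟨n, hn⟩ := key i (min_le_left _ _) (le_max_left _ _)
    obtain ⟨m, hm⟩ := key j (min_le_right _ _) (le_max_right _ _)
    exact ⟨n, m, by rw [hn, hm]⟩
  · intro i
    obtain ⟨l₀, hl₀, hneg⟩ := hb i
    rw [sum_Ico_eq x hl₀.le] at hneg
    refine (Set.finite_Ioo l₀ i).subset ?_
    rintro j ⟨hji, m, hm1, hmi⟩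
    refine ⟨?_, hji⟩
    by_contra hc
    have hjl₀ : j ≤ l₀ := by omega
    have := (iterate_prop hf j m).2 l₀ hjl₀ (by rw [hmi]; omega)
    rw [hmi] at this
    omega



lemma maxdiv {a : ℕ → ℝ} (ha : ∀ n, 0 ≤ a n)
    (h : Tendsto (fun n => a n / n) atTop (𝓝 0)) :
    Tendsto (fun N => (Finset.range (N + 1)).sup' Finset.nonempty_range_add_one a / (N + 1))
      atTop (𝓝 0) := by
  rw [Metric.tendsto_atTop] at h ⊢
  intro ε hε
  obtain ⟨K, hK⟩ := h (ε / 2) (by positivity)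
  set C := (Finset.range (K + 1)).sup' Finset.nonempty_range_add_one a with hC
  have hC0 : 0 ≤ C := le_trans (ha 0) (Finset.le_sup' a (by simp))
  refine ⟨max K ⌈C * 2 / ε⌉₊, fun N hN => ?_⟩
  have hNK : K ≤ N := le_trans (le_max_left _ _) hN
  have hNC : (⌈C * 2 / ε⌉₊ : ℝ) ≤ N := by
    exact_mod_cast Nat.cast_le.2 (le_trans (le_max_right _ _) hN)
  have hCN : C ≤ ε / 2 * (N + 1) := by
    have h1 : C * 2 / ε ≤ (N : ℝ) := le_trans (Nat.le_ceil _) hNC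
    rw [div_le_iff₀ hε] at h1
    nlinarith
  have hsup : (Finset.range (N + 1)).sup' Finset.nonempty_range_add_one a ≤ ε / 2 * (N + 1) := by
    refine Finset.sup'_le _ _ fun n hn => ?_
    rcases le_or_gt n K with hnK | hKn
    · exact le_trans (Finset.le_sup' a (by simp [Finset.mem_range]; omega)) hCN
    · have := hK n (le_of_lt hKn)
      rw [Real.dist_eq, sub_zero, abs_of_nonneg (div_nonneg (ha n) (Nat.cast_nonneg n))] at this
      have hn0 : (0 : ℝ) < n := by exact_mod_cast (by omega : 0 < n)
      rw [div_lt_iff₀ hn0] at this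
      have hnN : (n : ℝ) ≤ N := by
        exact_mod_cast Nat.lt_succ_iff.1 (Finset.mem_range.1 hn)
      nlinarith
  have hsup0 : 0 ≤ (Finset.range (N + 1)).sup' Finset.nonempty_range_add_one a :=
    le_trans (ha 0) (Finset.le_sup' a (by simp))
  rw [Real.dist_eq, sub_zero, abs_of_nonneg (by positivity)]
  rw [div_lt_iff₀ (by positivity)]
  nlinarith

variable {Ω : Type*} [MeasureSpace Ω] [IsProbabilityMeasure (ℙ : Measure Ω)]

/-- Key counting lemma: a stationary family of events whose occurrence times carry
pairwise distinct integer values `V n`, with `V n = o(n)` a.s., has probability zero. -/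
lemma key (V : ℕ → Ω → ℤ) (D : ℕ → Set Ω) (hD : ∀ n, MeasurableSet (D n))
    (hstat : ∀ n, ℙ (D n) = ℙ (D 0))
    (hinj : ∀ ω, ∀ n m : ℕ, n < m → ω ∈ D n → ω ∈ D m → V n ω ≠ V m ω)
    (hV : ∀ᵐ ω ∂ℙ, Tendsto (fun n => (V n ω : ℝ) / n) atTop (𝓝 0)) :
    ℙ (D 0) = 0 := by
  classical
  set f : ℕ → Ω → ℝ := fun N ω =>
    (∑ n ∈ Finset.range (N + 1), Set.indicator (D n) (fun _ => (1 : ℝ)) ω) / (N + 1) with hf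
  have hfmeas : ∀ N, Measurable (f N) := by
    intro N
    exact (Finset.measurable_sum _ fun n _ =>
      (measurable_const.indicator (hD n))).div_const _
  have hfsum : ∀ N ω, ∑ n ∈ Finset.range (N + 1), Set.indicator (D n) (fun _ => (1 : ℝ)) ω
      = ((Finset.range (N + 1)).filter (fun n => ω ∈ D n)).card := by
    intro N ω
    rw [Finset.card_filter]
    push_cast
    refine Finset.sum_congr rfl fun n _ => ?_
    by_cases h : ω ∈ D n <;> simp [Set.indicator_apply, h]
  have hbound : ∀ N ω, 0 ≤ f N ω ∧ f N ω ≤ 1 := by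
    intro N ω
    have h1 : (0:ℝ) ≤ ∑ n ∈ Finset.range (N + 1), Set.indicator (D n) (fun _ => (1 : ℝ)) ω :=
      Finset.sum_nonneg fun n _ => Set.indicator_nonneg (fun _ _ => zero_le_one) _
    have h2 : ∑ n ∈ Finset.range (N + 1), Set.indicator (D n) (fun _ => (1 : ℝ)) ω
        ≤ (N + 1 : ℝ) := by
      calc _ ≤ ∑ _n ∈ Finset.range (N + 1), (1:ℝ) :=
            Finset.sum_le_sum fun n _ => Set.indicator_le_self' (fun _ _ => zero_le_one) _
        _ = (N + 1 : ℝ) := by simp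
    constructor
    · exact div_nonneg h1 (by positivity)
    · rw [div_le_one (by positivity)]; exact h2
  -- a.e. convergence to 0
  have hf0 : ∀ᵐ ω ∂ℙ, Tendsto (fun N => f N ω) atTop (𝓝 0) := by
    filter_upwards [hV] with ω hω
    have habs : Tendsto (fun n => |(V n ω : ℝ)| / n) atTop (𝓝 0) := by
      have := hω.abs
      rw [abs_zero] at this
      refine this.congr fun n => ?_
      rw [abs_div, abs_of_nonneg (by positivity : (0:ℝ) ≤ (n:ℝ))]
    have hmax := maxdiv (fun n => abs_nonneg _) habs
    -- per-N cardinality bound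
    have hcard : ∀ N, f N ω ≤
        (2 * ((Finset.range (N + 1)).sup' Finset.nonempty_range_add_one
          (fun n => |(V n ω : ℝ)|)) + 1) / (N + 1) := by
      intro N
      set B : ℝ := (Finset.range (N + 1)).sup' Finset.nonempty_range_add_one
        (fun n => |(V n ω : ℝ)|) with hB
      have hB0 : 0 ≤ B := le_trans (abs_nonneg (V 0 ω : ℝ))
        (Finset.le_sup' (fun n => |(V n ω : ℝ)|) (Finset.mem_range.2 (Nat.succ_pos N)))
      have hcc : (((Finset.range (N + 1)).filter (fun n => ω ∈ D n)).card : ℝ)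
          ≤ 2 * B + 1 := by
        set BZ : ℤ := (Finset.range (N + 1)).sup' Finset.nonempty_range_add_one
          (fun n => |V n ω|) with hBZ
        have hBZB : (BZ : ℝ) ≤ B := by
          have hmem := Finset.exists_mem_eq_sup' (α := ℤ)
            (Finset.nonempty_range_add_one (n := N)) (fun n => |V n ω|)
          obtain ⟨n, hn, hneq⟩ := hmem
          rw [hBZ, hneq]
          push_cast
          exact Finset.le_sup' (f := fun n => |(V n ω : ℝ)|) hn
        have hsubs : ∀ n ∈ (Finset.range (N + 1)).filter (fun n => ω ∈ D n),
            V n ω ∈ Finset.Icc (-BZ) BZ := by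
          intro n hn
          rw [Finset.mem_filter] at hn
          have : |V n ω| ≤ BZ := Finset.le_sup' (f := fun n => |V n ω|) hn.1
          rw [Finset.mem_Icc]
          exact abs_le.1 this
        have hinj' : Set.InjOn (fun n => V n ω)
            ((Finset.range (N + 1)).filter (fun n => ω ∈ D n)) := by
          intro n hn m hm hnm
          simp only [Finset.coe_filter, Set.mem_setOf_eq] at hn hm
          by_contra hne
          rcases lt_or_gt_of_ne hne with h | h
          · exact hinj ω n m h hn.2 hm.2 hnm
          · exact hinj ω m n h hm.2 hn.2 hnm.symm
        have hcard' := Finset.card_le_card_of_injOn _ hsubs hinj'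
        rw [Int.card_Icc] at hcard'
        have hBZ0 : 0 ≤ BZ := le_trans (abs_nonneg (V 0 ω))
          (Finset.le_sup' (fun n => |V n ω|) (Finset.mem_range.2 (Nat.succ_pos N)))
        have : (((Finset.range (N + 1)).filter (fun n => ω ∈ D n)).card : ℤ)
            ≤ 2 * BZ + 1 := by
          omega
        calc (((Finset.range (N + 1)).filter (fun n => ω ∈ D n)).card : ℝ)
            ≤ ((2 * BZ + 1 : ℤ) : ℝ) := by exact_mod_cast this
          _ ≤ 2 * B + 1 := by push_cast; linarith
      rw [hf, div_le_div_iff_of_pos_right (by positivity)] at *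
      rw [hfsum]
      exact hcc
    refine squeeze_zero (fun N => (hbound N ω).1) hcard ?_
    have h1 : Tendsto (fun N : ℕ =>
        2 * ((Finset.range (N + 1)).sup' Finset.nonempty_range_add_one
          (fun n => |(V n ω : ℝ)|) / (N + 1)) + 1 / (N + 1)) atTop (𝓝 (2 * 0 + 0)) := by
      refine Tendsto.add (hmax.const_mul 2) ?_
      have : Tendsto (fun n : ℕ => 1 / ((n : ℝ) + 1)) atTop (𝓝 0) :=
        tendsto_one_div_add_atTop_nhds_zero_nat
      exact this.congr fun N => by push_cast; ring_nf
    rw [mul_zero, add_zero] at h1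
    refine h1.congr fun N => ?_
    field_simp
  -- integrals
  have hint : ∀ N, ∫ ω, f N ω ∂ℙ = (ℙ (D 0)).toReal := by
    intro N
    rw [hf]
    simp only
    rw [integral_div]
    rw [integral_finset_sum _ (fun n _ => (integrable_const (1:ℝ)).indicator (hD n))]
    have : ∀ n ∈ Finset.range (N + 1),
        ∫ ω, Set.indicator (D n) (fun _ => (1:ℝ)) ω ∂ℙ = (ℙ (D 0)).toReal := by
      intro n _
      rw [integral_indicator_const _ (hD n), measureReal_def, hstat n]
      simp
    rw [Finset.sum_congr rfl this, Finset.sum_const, Finset.card_range]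
    have hN1 : ((N:ℝ) + 1) ≠ 0 := by positivity
    field_simp
    rw [nsmul_eq_mul]; push_cast; ring
  have hdct := tendsto_integral_of_dominated_convergence (fun _ => (1:ℝ))
    (fun N => (hfmeas N).aestronglyMeasurable) (integrable_const 1)
    (fun N => Filter.Eventually.of_forall fun ω => by
      rw [Real.norm_eq_abs, abs_of_nonneg (hbound N ω).1]; exact (hbound N ω).2)
    hf0
  rw [integral_zero] at hdct
  have h0 : (0 : ℝ) = (ℙ (D 0)).toReal :=
    tendsto_nhds_unique ((tendsto_congr fun N => (hint N)).1 hdct) tendsto_const_nhds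
  exact ((ENNReal.toReal_eq_zero_iff _).1 h0.symm).resolve_right (measure_ne_top _ _)



variable {Ω : Type*} [MeasureSpace Ω] [IsProbabilityMeasure (ℙ : Measure Ω)]
variable {X : ℤ → Ω → ℤ}

lemma finlaw (hmeas : ∀ n, Measurable (X n))
    (hindep : iIndepFun X ℙ)
    (hident : ∀ n, IdentDistrib (X n) (X 0) ℙ ℙ)
    (u : ℕ → ℤ) (hu : Function.Injective u) (s : Finset ℕ) :
    Measure.map (fun ω => s.restrict (fun k => X (u k) ω)) ℙ
      = Measure.pi (fun _ : s => Measure.map (X 0) ℙ) := by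
  have hprob : IsProbabilityMeasure (Measure.map (X 0) ℙ) :=
    Measure.isProbabilityMeasure_map (hmeas 0).aemeasurable
  refine (Measure.pi_eq fun t ht => ?_).symm
  have hres : Measurable (fun ω => s.restrict (fun k => X (u k) ω)) :=
    measurable_pi_lambda _ fun i => hmeas (u i)
  rw [Measure.map_apply hres (MeasurableSet.univ_pi ht)]
  classical
  have hsets_meas : ∀ j : ℤ, MeasurableSet (⋂ (i : s) (_ : u (i : ℕ) = j), t i) := fun j =>
    MeasurableSet.iInter fun i => MeasurableSet.iInter fun _ => ht i
  have hsets_eq : ∀ i : s, (⋂ (i' : s) (_ : u (i' : ℕ) = u (i : ℕ)), t i') = t i := by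
    intro i
    apply Set.Subset.antisymm
    · intro z hz
      exact Set.mem_iInter₂.1 hz i rfl
    · intro z hz
      refine Set.mem_iInter₂.2 fun i' hi' => ?_
      have h2 : i' = i := Subtype.ext (hu hi')
      rwa [h2]
  have hpre : (fun ω => s.restrict (fun k => X (u k) ω)) ⁻¹' Set.pi Set.univ t
      = ⋂ j ∈ s.image u, X j ⁻¹' (⋂ (i : s) (_ : u (i : ℕ) = j), t i) := by
    ext ω
    simp only [Set.mem_preimage, Set.mem_pi, Set.mem_univ, forall_true_left,
      Set.mem_iInter, Finset.mem_image, Finset.restrict]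
    constructor
    · rintro h j hj i rfl
      have h2 : i = (⟨(i:ℕ), i.2⟩ : s) := Subtype.ext rfl
      exact h i
    · intro h i
      have := h (u (i : ℕ)) ⟨(i : ℕ), i.2, rfl⟩ i rfl
      exact this
  rw [hpre]
  rw [hindep.measure_inter_preimage_eq_mul _ (fun j _ => hsets_meas j)]
  rw [Finset.prod_image (fun i _ i' _ h => hu h)]
  have hrhs : ∀ i : s, (Measure.pi (fun _ : s => Measure.map (X 0) ℙ)) (Set.pi Set.univ t)
      = (Measure.pi (fun _ : s => Measure.map (X 0) ℙ)) (Set.pi Set.univ t) := fun _ => rfl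
  have step : ∀ n ∈ s, ℙ (X (u n) ⁻¹' (⋂ (i : s) (_ : u (i : ℕ) = u n), t i))
      = Measure.map (X 0) ℙ (⋂ (i : s) (_ : u (i : ℕ) = u n), t i) := by
    intro n hn
    rw [← Measure.map_apply (hmeas (u n)) (hsets_meas (u n)), (hident (u n)).map_eq]
  rw [Finset.prod_congr rfl step]
  have : ∀ i : s, Measure.map (X 0) ℙ (t i)
      = Measure.map (X 0) ℙ (⋂ (i' : s) (_ : u (i' : ℕ) = u (i : ℕ)), t i') := by
    intro i; rw [hsets_eq i]
  rw [Finset.prod_congr rfl fun i _ => this i]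
  exact (Finset.prod_coe_sort s
    (fun n => Measure.map (X 0) ℙ (⋂ (i' : s) (_ : u (i' : ℕ) = u n), t i'))).symm

lemma lawEq (hmeas : ∀ n, Measurable (X n))
    (hindep : iIndepFun X ℙ)
    (hident : ∀ n, IdentDistrib (X n) (X 0) ℙ ℙ)
    (u v : ℕ → ℤ) (hu : Function.Injective u) (hv : Function.Injective v) :
    Measure.map (fun ω (k : ℕ) => X (u k) ω) ℙ
      = Measure.map (fun ω (k : ℕ) => X (v k) ω) ℙ := by
  have hΦu : Measurable (fun ω (k : ℕ) => X (u k) ω) :=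
    measurable_pi_lambda _ fun k => hmeas (u k)
  have hΦv : Measurable (fun ω (k : ℕ) => X (v k) ω) :=
    measurable_pi_lambda _ fun k => hmeas (v k)
  have h1 : IsProbabilityMeasure (Measure.map (fun ω (k : ℕ) => X (u k) ω) ℙ) :=
    Measure.isProbabilityMeasure_map hΦu.aemeasurable
  have h2 : IsProbabilityMeasure (Measure.map (fun ω (k : ℕ) => X (v k) ω) ℙ) :=
    Measure.isProbabilityMeasure_map hΦv.aemeasurable
  refine ext_of_generate_finite (measurableCylinders (fun _ : ℕ => ℤ))
    generateFrom_measurableCylinders.symm isPiSystem_measurableCylinders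
    (fun t ht => ?_) (by simp [measure_univ])
  obtain ⟨s, S, hS, rfl⟩ := (mem_measurableCylinders t).mp ht
  rw [Measure.map_apply hΦu hS.cylinder, Measure.map_apply hΦv hS.cylinder]
  have hresu : Measurable (fun ω => s.restrict (fun k => X (u k) ω)) :=
    measurable_pi_lambda _ fun i => hmeas (u i)
  have hresv : Measurable (fun ω => s.restrict (fun k => X (v k) ω)) :=
    measurable_pi_lambda _ fun i => hmeas (v i)
  have e1 : (fun ω (k : ℕ) => X (u k) ω) ⁻¹' cylinder s S
      = (fun ω => s.restrict (fun k => X (u k) ω)) ⁻¹' S := rfl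
  have e2 : (fun ω (k : ℕ) => X (v k) ω) ⁻¹' cylinder s S
      = (fun ω => s.restrict (fun k => X (v k) ω)) ⁻¹' S := rfl
  have hAu : ℙ ((fun ω => s.restrict (fun k => X (u k) ω)) ⁻¹' S)
      = Measure.pi (fun _ : s => Measure.map (X 0) ℙ) S := by
    rw [← Measure.map_apply hresu hS, finlaw hmeas hindep hident u hu s]
  have hAv : ℙ ((fun ω => s.restrict (fun k => X (v k) ω)) ⁻¹' S)
      = Measure.pi (fun _ : s => Measure.map (X 0) ℙ) S := by
    rw [← Measure.map_apply hresv hS, finlaw hmeas hindep hident v hv s]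
  rw [e1, e2, hAu, hAv]

lemma probEq (hmeas : ∀ n, Measurable (X n))
    (hindep : iIndepFun X ℙ)
    (hident : ∀ n, IdentDistrib (X n) (X 0) ℙ ℙ)
    (u v : ℕ → ℤ) (hu : Function.Injective u) (hv : Function.Injective v)
    {A : Set (ℕ → ℤ)} (hA : MeasurableSet A) :
    ℙ {ω | (fun k => X (u k) ω) ∈ A} = ℙ {ω | (fun k => X (v k) ω) ∈ A} := by
  have hΦu : Measurable (fun ω (k : ℕ) => X (u k) ω) :=
    measurable_pi_lambda _ fun k => hmeas (u k)
  have hΦv : Measurable (fun ω (k : ℕ) => X (v k) ω) :=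
    measurable_pi_lambda _ fun k => hmeas (v k)
  have e1 : {ω | (fun k => X (u k) ω) ∈ A} = (fun ω (k : ℕ) => X (u k) ω) ⁻¹' A := rfl
  have e2 : {ω | (fun k => X (v k) ω) ∈ A} = (fun ω (k : ℕ) => X (v k) ω) ⁻¹' A := rfl
  rw [e1, e2, ← Measure.map_apply hΦu hA, ← Measure.map_apply hΦv hA,
    lawEq hmeas hindep hident u v hu hv]

lemma slln (hmeas : ∀ n, Measurable (X n))
    (hindep : iIndepFun X ℙ)
    (hident : ∀ n, IdentDistrib (X n) (X 0) ℙ ℙ)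
    (hint : Integrable (fun ω => (X 0 ω : ℝ)) ℙ)
    (hmean : ∫ ω, (X 0 ω : ℝ) ∂ℙ = 0)
    (u : ℕ → ℤ) (hu : Function.Injective u) :
    ∀ᵐ ω ∂ℙ, Tendsto (fun m : ℕ => ((∑ k ∈ Finset.range m, X (u k) ω : ℤ) : ℝ) / m)
      atTop (𝓝 0) := by
  set Y : ℕ → Ω → ℝ := fun k ω => (X (u k) ω : ℝ) with hY
  have hid : ∀ k : ℕ, IdentDistrib (Y k) (fun ω => (X 0 ω : ℝ)) ℙ ℙ := fun k =>
    (hident (u k)).comp (measurable_from_top (f := fun z : ℤ => (z : ℝ)))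
  have hint' : Integrable (Y 0) ℙ := (hid 0).integrable_iff.2 hint
  have hindep' : Pairwise (Function.onFun (IndepFun · · ℙ) Y) := by
    intro i j hij
    exact (hindep.indepFun (hu.ne hij)).comp
      (measurable_from_top (f := fun z : ℤ => (z : ℝ)))
      (measurable_from_top (f := fun z : ℤ => (z : ℝ)))
  have hident' : ∀ i, IdentDistrib (Y i) (Y 0) ℙ ℙ := fun i => (hid i).trans (hid 0).symm
  have h := strong_law_ae_real Y hint' hindep' hident'
  have hmean' : ∫ ω, Y 0 ω ∂ℙ = 0 := by rw [(hid 0).integral_eq]; exact hmean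
  filter_upwards [h] with ω hω
  rw [hmean'] at hω
  refine hω.congr fun m => ?_
  push_cast
  rfl



lemma sum_Ico_eq_range' (g : ℤ → ℤ) {a b : ℤ} (hab : a ≤ b) :
    ∑ l ∈ Finset.Ico a b, g l = ∑ k ∈ Finset.range (b - a).toNat, g (a + k) := by
  refine Finset.sum_nbij' (i := fun l => (l - a).toNat) (j := fun k => a + (k : ℤ))
    ?_ ?_ ?_ ?_ ?_
  · intro l hl; rw [Finset.mem_Ico] at hl; rw [Finset.mem_range]; omega
  · intro k hk; rw [Finset.mem_range] at hk; rw [Finset.mem_Ico]; omega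
  · intro l hl; rw [Finset.mem_Ico] at hl; omega
  · intro k hk; rw [Finset.mem_range] at hk; omega
  · intro l hl; rw [Finset.mem_Ico] at hl; congr 1; omega

lemma sum_Ico_eq_range_rev (g : ℤ → ℤ) {a b : ℤ} (hab : a ≤ b) :
    ∑ l ∈ Finset.Ico a b, g l = ∑ k ∈ Finset.range (b - a).toNat, g (b - 1 - k) := by
  refine Finset.sum_nbij' (i := fun l => (b - 1 - l).toNat) (j := fun k => b - 1 - (k : ℤ))
    ?_ ?_ ?_ ?_ ?_
  · intro l hl; rw [Finset.mem_Ico] at hl; rw [Finset.mem_range]; omega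
  · intro k hk; rw [Finset.mem_range] at hk; rw [Finset.mem_Ico]; omega
  · intro l hl; rw [Finset.mem_Ico] at hl; omega
  · intro k hk; rw [Finset.mem_range] at hk; omega
  · intro l hl; rw [Finset.mem_Ico] at hl; congr 1; omega

variable {Ω : Type*} [MeasureSpace Ω] [IsProbabilityMeasure (ℙ : Measure Ω)]
variable {X : ℤ → Ω → ℤ}

lemma meas_event {P : ℕ → ℤ → Prop} :
    MeasurableSet {y : ℕ → ℤ | ∀ m : ℕ, 1 ≤ m → P m (∑ k ∈ Finset.range m, y k)} := by
  have : {y : ℕ → ℤ | ∀ m : ℕ, 1 ≤ m → P m (∑ k ∈ Finset.range m, y k)}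
      = ⋂ (m : ℕ) (_ : 1 ≤ m),
        (fun y : ℕ → ℤ => ∑ k ∈ Finset.range m, y k) ⁻¹' {z : ℤ | P m z} := by
    ext y; simp [Set.mem_iInter]
  rw [this]
  exact MeasurableSet.iInter fun m => MeasurableSet.iInter fun _ =>
    (Finset.measurable_sum _ fun k _ => measurable_pi_apply k) trivial

/-- Forward part: the walk cannot stay strictly negative forever after `n`. -/
lemma fwd (hmeas : ∀ n, Measurable (X n))
    (hindep : iIndepFun X ℙ)
    (hident : ∀ n, IdentDistrib (X n) (X 0) ℙ ℙ)
    (hint : Integrable (fun ω => (X 0 ω : ℝ)) ℙ)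
    (hmean : ∫ ω, (X 0 ω : ℝ) ∂ℙ = 0) (n : ℤ) :
    ℙ {ω | ∀ j : ℤ, n < j → ∑ l ∈ Finset.Ico n j, X l ω < 0} = 0 := by
  classical
  set A : Set (ℕ → ℤ) := {y | ∀ m : ℕ, 1 ≤ m → ∑ k ∈ Finset.range m, y k < 0} with hA
  have hAmeas : MeasurableSet A := meas_event (P := fun _ z => z < 0)
  set D : ℕ → Set Ω := fun m => {ω | (fun k : ℕ => X (n + (m : ℤ) + (k : ℤ)) ω) ∈ A} with hD
  have hDmeas : ∀ m, MeasurableSet (D m) :=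
    fun m => (measurable_pi_lambda _ fun k => hmeas _) hAmeas
  have hDstat : ∀ m, ℙ (D m) = ℙ (D 0) := by
    intro m
    exact probEq hmeas hindep hident
      (fun k : ℕ => n + (m : ℤ) + (k : ℤ)) (fun k : ℕ => n + ((0 : ℕ) : ℤ) + (k : ℤ))
      (fun a b hab => by simp only at hab; omega) (fun a b hab => by simp only at hab; omega) hAmeas
  have hkey := key (fun m ω => ∑ k ∈ Finset.range m, X (n + (k : ℤ)) ω) D hDmeas hDstat
    ?_ ?_
  · -- identify the target event with D 0
    have hev : {ω | ∀ j : ℤ, n < j → ∑ l ∈ Finset.Ico n j, X l ω < 0} = D 0 := by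
      ext ω
      simp only [hD, hA, Set.mem_setOf_eq]
      constructor
      · intro h m hm
        have hlt : n < n + (m : ℤ) := by omega
        have := h (n + (m : ℤ)) hlt
        rw [sum_Ico_eq_range' (fun l => X l ω) hlt.le] at this
        have he : (n + (m : ℤ) - n).toNat = m := by omega
        rw [he] at this
        refine lt_of_eq_of_lt ?_ this
        refine Finset.sum_congr rfl fun k _ => ?_
        congr 1
        push_cast
        ring
      · intro h j hj
        have hm : 1 ≤ (j - n).toNat := by omega
        have := h (j - n).toNat hm
        rw [sum_Ico_eq_range' (fun l => X l ω) hj.le]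
        refine lt_of_eq_of_lt ?_ this
        refine Finset.sum_congr rfl fun k _ => ?_
        congr 1
        push_cast
        omega
    rw [hev]
    exact hkey
  · -- injectivity of values on occurrence times
    intro ω m m' hmm' h1 _h2
    have hsub : ∑ k ∈ Finset.range m', X (n + (k : ℤ)) ω
        = ∑ k ∈ Finset.range m, X (n + (k : ℤ)) ω
          + ∑ k ∈ Finset.range (m' - m), X (n + (m : ℤ) + (k : ℤ)) ω := by
      have e1 : ∑ k ∈ Finset.Ico m m', X (n + (k : ℤ)) ω
          = ∑ k ∈ Finset.range m', X (n + (k : ℤ)) ω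
            - ∑ k ∈ Finset.range m, X (n + (k : ℤ)) ω :=
        Finset.sum_Ico_eq_sub _ hmm'.le
      have e2 : ∑ k ∈ Finset.Ico m m', X (n + (k : ℤ)) ω
          = ∑ k ∈ Finset.range (m' - m), X (n + ((m + k : ℕ) : ℤ)) ω := by
        rw [Finset.sum_Ico_eq_sum_range]
      have e3 : ∑ k ∈ Finset.range (m' - m), X (n + ((m + k : ℕ) : ℤ)) ω
          = ∑ k ∈ Finset.range (m' - m), X (n + (m : ℤ) + (k : ℤ)) ω := by
        refine Finset.sum_congr rfl fun k _ => ?_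
        congr 1
        push_cast
        ring
      omega
    have hneg : ∑ k ∈ Finset.range (m' - m), X (n + (m : ℤ) + (k : ℤ)) ω < 0 :=
      h1 (m' - m) (by omega)
    show ∑ k ∈ Finset.range m, X (n + (k : ℤ)) ω ≠ ∑ k ∈ Finset.range m', X (n + (k : ℤ)) ω
    omega
  · -- SLLN
    exact slln hmeas hindep hident hint hmean (fun k : ℕ => n + (k : ℤ))
      (fun a b hab => by simp only at hab; omega)

/-- `ℙ (X 0 ≥ 1) > 0` under zero mean and an atom at `-1`. -/
lemma pos_up (hmeas : ∀ n, Measurable (X n))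
    (hneg : 0 < ℙ {ω | X 0 ω = -1})
    (hint : Integrable (fun ω => (X 0 ω : ℝ)) ℙ)
    (hmean : ∫ ω, (X 0 ω : ℝ) ∂ℙ = 0) :
    0 < ℙ {ω | 1 ≤ X 0 ω} := by
  rcases eq_or_lt_of_le (zero_le : 0 ≤ ℙ {ω | 1 ≤ X 0 ω}) with h0 | h0
  · exfalso
    have hae : ∀ᵐ ω ∂ℙ, ¬ (1 ≤ X 0 ω) := by
      rw [ae_iff]
      simpa using h0.symm
    have hae2 : ∀ᵐ ω ∂ℙ, 0 ≤ -(X 0 ω : ℝ) := by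
      filter_upwards [hae] with ω hω
      have : X 0 ω ≤ 0 := by omega
      have : (X 0 ω : ℝ) ≤ 0 := by exact_mod_cast this
      linarith
    have hzero : (fun ω => -(X 0 ω : ℝ)) =ᵐ[ℙ] 0 := by
      rw [← integral_eq_zero_iff_of_nonneg_ae hae2 hint.neg]
      rw [integral_neg, hmean, neg_zero]
    have hXzero : ∀ᵐ ω ∂ℙ, X 0 ω = 0 := by
      filter_upwards [hzero] with ω hω
      simp only [Pi.zero_apply, neg_eq_zero] at hω
      exact_mod_cast hω
    have : ℙ {ω | X 0 ω = -1} = 0 := by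
      refine measure_mono_null ?_ (ae_iff.1 hXzero)
      intro ω hω
      simp only [Set.mem_setOf_eq] at *
      omega
    rw [this] at hneg
    exact lt_irrefl _ hneg
  · exact h0

/-- Backward part: the walk into the past cannot stay nonnegative forever before `n`. -/
lemma bwd (hmeas : ∀ n, Measurable (X n))
    (hindep : iIndepFun X ℙ)
    (hident : ∀ n, IdentDistrib (X n) (X 0) ℙ ℙ)
    (hneg : 0 < ℙ {ω | X 0 ω = -1})
    (hint : Integrable (fun ω => (X 0 ω : ℝ)) ℙ)
    (hmean : ∫ ω, (X 0 ω : ℝ) ∂ℙ = 0) (n : ℤ) :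
    ℙ {ω | ∀ l : ℤ, l < n → 0 ≤ ∑ l' ∈ Finset.Ico l n, X l' ω} = 0 := by
  classical
  -- the strict-record event set
  set DS : Set (ℕ → ℤ) :=
    {y | ∀ m : ℕ, 1 ≤ m → (1 ≤ y 0 ∧ y 0 ≤ ∑ k ∈ Finset.range m, y k)} with hDS
  have hDSmeas : MeasurableSet DS := by
    have hset : DS = ((fun y : ℕ → ℤ => y 0) ⁻¹' {z : ℤ | 1 ≤ z}) ∩
        ⋂ (m : ℕ) (_ : 1 ≤ m),
          ((fun y : ℕ → ℤ => (∑ k ∈ Finset.range m, y k) - y 0) ⁻¹' {z : ℤ | 0 ≤ z}) := by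
      ext y
      simp only [hDS, Set.mem_setOf_eq, Set.mem_inter_iff, Set.mem_preimage, Set.mem_iInter]
      constructor
      · intro h
        exact ⟨(h 1 le_rfl).1, fun m hm => by have := (h m hm).2; omega⟩
      · rintro ⟨h1, h2⟩ m hm
        exact ⟨h1, by have := h2 m hm; omega⟩
    rw [hset]
    refine MeasurableSet.inter ((measurable_pi_apply 0) trivial) ?_
    refine MeasurableSet.iInter fun m => MeasurableSet.iInter fun _ => ?_
    exact ((Finset.measurable_sum _ fun k _ => measurable_pi_apply k).sub
      (measurable_pi_apply 0)) trivial
  set D : ℕ → Set Ω := fun m => {ω | (fun k : ℕ => X (n - 1 - (m : ℤ) - (k : ℤ)) ω) ∈ DS}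
    with hD
  have hDmeas : ∀ m, MeasurableSet (D m) :=
    fun m => (measurable_pi_lambda _ fun k => hmeas _) hDSmeas
  have hDstat : ∀ m, ℙ (D m) = ℙ (D 0) := by
    intro m
    exact probEq hmeas hindep hident
      (fun k : ℕ => n - 1 - (m : ℤ) - (k : ℤ)) (fun k : ℕ => n - 1 - ((0 : ℕ) : ℤ) - (k : ℤ))
      (fun a b hab => by simp only at hab; omega) (fun a b hab => by simp only at hab; omega) hDSmeas
  -- key lemma: the strict-record event has probability zero
  have hkey : ℙ (D 0) = 0 := by
    refine key (fun m ω => ∑ k ∈ Finset.range (m + 1), X (n - 1 - (k : ℤ)) ω) D hDmeas hDstat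
      ?_ ?_
    · intro ω m m' hmm' h1 h2
      simp only [hD, hDS, Set.mem_setOf_eq] at h1 h2
      -- second member of D m' : 1 ≤ X (n - 1 - m')
      have hy1 : 1 ≤ X (n - 1 - (m' : ℤ)) ω := by
        have := (h2 1 le_rfl).1
        simpa using this
      -- record property from D m at j = m' - m
      have hy2 : X (n - 1 - (m : ℤ)) ω
          ≤ ∑ k ∈ Finset.range (m' - m), X (n - 1 - (m : ℤ) - (k : ℤ)) ω := by
        have := (h1 (m' - m) (by omega)).2
        simpa using this
      -- rewrite the sums
      have e2 : ∑ k ∈ Finset.range (m' - m), X (n - 1 - (m : ℤ) - (k : ℤ)) ω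
          = ∑ k ∈ Finset.range m', X (n - 1 - (k : ℤ)) ω
            - ∑ k ∈ Finset.range m, X (n - 1 - (k : ℤ)) ω := by
        have e1 : ∑ k ∈ Finset.Ico m m', X (n - 1 - (k : ℤ)) ω
            = ∑ k ∈ Finset.range m', X (n - 1 - (k : ℤ)) ω
              - ∑ k ∈ Finset.range m, X (n - 1 - (k : ℤ)) ω :=
          Finset.sum_Ico_eq_sub _ hmm'.le
        have e3 : ∑ k ∈ Finset.Ico m m', X (n - 1 - (k : ℤ)) ω
            = ∑ k ∈ Finset.range (m' - m), X (n - 1 - ((m + k : ℕ) : ℤ)) ω := by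
          rw [Finset.sum_Ico_eq_sum_range]
        have e4 : ∑ k ∈ Finset.range (m' - m), X (n - 1 - ((m + k : ℕ) : ℤ)) ω
            = ∑ k ∈ Finset.range (m' - m), X (n - 1 - (m : ℤ) - (k : ℤ)) ω := by
          refine Finset.sum_congr rfl fun k _ => ?_
          congr 1
          push_cast
          ring
        omega
      have hsucc : ∑ k ∈ Finset.range (m + 1), X (n - 1 - (k : ℤ)) ω
          = ∑ k ∈ Finset.range m, X (n - 1 - (k : ℤ)) ω + X (n - 1 - (m : ℤ)) ω := by
        rw [Finset.sum_range_succ]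
      have hsucc' : ∑ k ∈ Finset.range (m' + 1), X (n - 1 - (k : ℤ)) ω
          = ∑ k ∈ Finset.range m', X (n - 1 - (k : ℤ)) ω + X (n - 1 - (m' : ℤ)) ω := by
        rw [Finset.sum_range_succ]
      show ∑ k ∈ Finset.range (m + 1), X (n - 1 - (k : ℤ)) ω
          ≠ ∑ k ∈ Finset.range (m' + 1), X (n - 1 - (k : ℤ)) ω
      omega
    · -- SLLN for shifted partial sums
      have hS := slln hmeas hindep hident hint hmean (fun k : ℕ => n - 1 - (k : ℤ))
        (fun a b hab => by simp only at hab; omega)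
      filter_upwards [hS] with ω hω
      have h2 : Tendsto (fun m : ℕ =>
          ((∑ k ∈ Finset.range (m + 1), X (n - 1 - (k : ℤ)) ω : ℤ) : ℝ) / ((m : ℝ) + 1))
          atTop (𝓝 0) := by
        have := hω.comp (tendsto_add_atTop_nat 1)
        refine this.congr fun m => ?_
        simp only [Function.comp_apply]
        push_cast
        ring_nf
      have h3 : Tendsto (fun m : ℕ => ((m : ℝ) + 1) / (m : ℝ)) atTop (𝓝 1) := by
        have : Tendsto (fun m : ℕ => 1 + 1 / (m : ℝ)) atTop (𝓝 (1 + 0)) :=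
          tendsto_const_nhds.add tendsto_one_div_atTop_nhds_zero_nat
        rw [add_zero] at this
        refine Tendsto.congr' ?_ this
        filter_upwards [eventually_ge_atTop 1] with m hm
        have hm0 : (m : ℝ) ≠ 0 := by positivity
        field_simp
      have h4 := h2.mul h3
      rw [zero_mul] at h4
      refine Tendsto.congr' ?_ h4
      filter_upwards [eventually_ge_atTop 1] with m hm
      have hm0 : (m : ℝ) ≠ 0 := by
        have : (1 : ℝ) ≤ (m : ℝ) := by exact_mod_cast hm
        linarith
      have hm1 : (m : ℝ) + 1 ≠ 0 := by positivity
      field_simp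
  -- identify D 0 as an intersection and use independence
  set E : Set Ω := {ω | ∀ m : ℕ, 1 ≤ m → 0 ≤ ∑ k ∈ Finset.range m, X (n - 2 - (k : ℤ)) ω}
    with hE
  have hD0 : D 0 = {ω | 1 ≤ X (n - 1) ω} ∩ E := by
    ext ω
    simp only [hD, hDS, hE, Set.mem_setOf_eq, Set.mem_inter_iff]
    constructor
    · intro h
      have h1 : 1 ≤ X (n - 1 - ((0:ℕ) : ℤ) - ((0 : ℕ) : ℤ)) ω := (h 1 le_rfl).1
      have hx : X (n - 1 - ((0:ℕ) : ℤ) - ((0 : ℕ) : ℤ)) ω = X (n - 1) ω := by norm_num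
      refine ⟨by rw [← hx]; exact h1, fun m hm => ?_⟩
      have h2 := (h (m + 1) (by omega)).2
      rw [Finset.sum_range_succ'] at h2
      have he : ∀ k ∈ Finset.range m,
          X (n - 1 - ((0:ℕ) : ℤ) - ((k + 1 : ℕ) : ℤ)) ω = X (n - 2 - (k : ℤ)) ω := by
        intro k _
        congr 1
        push_cast
        ring
      rw [Finset.sum_congr rfl he] at h2
      have hx2 : X (n - 1 - ((0:ℕ) : ℤ) - ((0 : ℕ) : ℤ)) ω = X (n - 1) ω := by norm_num
      rw [hx2] at h2
      omega
    · rintro ⟨h1, h2⟩ m hm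
      have hx : X (n - 1 - ((0:ℕ) : ℤ) - ((0 : ℕ) : ℤ)) ω = X (n - 1) ω := by norm_num
      refine ⟨by rw [hx]; exact h1, ?_⟩
      obtain ⟨t, rfl⟩ : ∃ t, m = t + 1 := ⟨m - 1, by omega⟩
      rw [Finset.sum_range_succ']
      have he : ∀ k ∈ Finset.range t,
          X (n - 1 - ((0:ℕ) : ℤ) - ((k + 1 : ℕ) : ℤ)) ω = X (n - 2 - (k : ℤ)) ω := by
        intro k _
        congr 1
        push_cast
        ring
      rw [Finset.sum_congr rfl he, hx]
      rcases Nat.eq_zero_or_pos t with ht | ht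
      · subst ht; simp
      · have := h2 t (by omega)
        omega
  -- independence of the two factors
  have hindepE : ℙ ({ω | 1 ≤ X (n - 1) ω} ∩ E) = ℙ {ω | 1 ≤ X (n - 1) ω} * ℙ E := by
    have hsplit := indep_iSup_of_disjoint
      (m := fun i : ℤ => MeasurableSpace.comap (X i) inferInstance)
      (fun i => (hmeas i).comap_le) hindep.iIndep
      (S := {n - 1}) (T := {i : ℤ | i ≤ n - 2}) (by
        rw [Set.disjoint_left]
        rintro i rfl hi
        simp only [Set.mem_setOf_eq] at hi
        omega)
    rw [Indep_iff] at hsplit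
    refine hsplit _ _ ?_ ?_
    · have hle : MeasurableSpace.comap (X (n - 1)) inferInstance
          ≤ ⨆ i ∈ ({n - 1} : Set ℤ), MeasurableSpace.comap (X i) inferInstance := by
        refine le_iSup₂ (f := fun (i : ℤ) (_ : i ∈ ({n - 1} : Set ℤ)) =>
          MeasurableSpace.comap (X i) inferInstance) (n - 1) rfl
      exact hle _ ⟨{z : ℤ | 1 ≤ z}, trivial, rfl⟩
    · set M : MeasurableSpace Ω := ⨆ i ∈ {i : ℤ | i ≤ n - 2},
        MeasurableSpace.comap (X i) inferInstance with hM
      have hXmeas : ∀ i : ℤ, i ≤ n - 2 → Measurable[M] (X i) := by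
        intro i hi
        have hle : MeasurableSpace.comap (X i) inferInstance ≤ M :=
          le_iSup₂ (f := fun (i : ℤ) (_ : i ∈ {i : ℤ | i ≤ n - 2}) =>
            MeasurableSpace.comap (X i) inferInstance) i hi
        intro s hs
        exact hle _ ⟨s, hs, rfl⟩
      have hEeq : E = ⋂ (m : ℕ) (_ : 1 ≤ m),
          (fun ω => ∑ k ∈ Finset.range m, X (n - 2 - (k : ℤ)) ω) ⁻¹' {z : ℤ | 0 ≤ z} := by
        ext ω; simp [hE, Set.mem_iInter]
      rw [hEeq]
      refine MeasurableSet.iInter fun m => MeasurableSet.iInter fun _ => ?_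
      have : Measurable[M] (fun ω => ∑ k ∈ Finset.range m, X (n - 2 - (k : ℤ)) ω) :=
        Finset.measurable_sum _ fun k _ => hXmeas _ (by omega)
      exact this trivial
  -- transfer the laws
  have hEP : ℙ E = ℙ {ω | ∀ l : ℤ, l < n → 0 ≤ ∑ l' ∈ Finset.Ico l n, X l' ω} := by
    have h1 : E = {ω | (fun k : ℕ => X (n - 2 - (k : ℤ)) ω)
        ∈ {y : ℕ → ℤ | ∀ m : ℕ, 1 ≤ m → 0 ≤ ∑ k ∈ Finset.range m, y k}} := rfl
    have h2 : {ω | ∀ l : ℤ, l < n → 0 ≤ ∑ l' ∈ Finset.Ico l n, X l' ω}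
        = {ω | (fun k : ℕ => X (n - 1 - (k : ℤ)) ω)
          ∈ {y : ℕ → ℤ | ∀ m : ℕ, 1 ≤ m → 0 ≤ ∑ k ∈ Finset.range m, y k}} := by
      ext ω
      simp only [Set.mem_setOf_eq]
      constructor
      · intro h m hm
        have hlt : n - (m : ℤ) < n := by omega
        have := h (n - (m : ℤ)) hlt
        rw [sum_Ico_eq_range_rev (fun l => X l ω) hlt.le] at this
        have he : (n - (n - (m : ℤ))).toNat = m := by omega
        rw [he] at this
        exact this
      · intro h l hl
        have hm : 1 ≤ (n - l).toNat := by omega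
        have := h (n - l).toNat hm
        rw [sum_Ico_eq_range_rev (fun l => X l ω) hl.le]
        exact this
    rw [h1, h2]
    exact probEq hmeas hindep hident
      (fun k : ℕ => n - 2 - (k : ℤ)) (fun k : ℕ => n - 1 - (k : ℤ))
      (fun a b hab => by simp only at hab; omega) (fun a b hab => by simp only at hab; omega) (meas_event (P := fun _ z => 0 ≤ z))
  -- positivity of the first factor
  have hpos : 0 < ℙ {ω | 1 ≤ X (n - 1) ω} := by
    have := (hident (n - 1)).measure_mem_eq (s := {z : ℤ | 1 ≤ z}) trivial
    have he1 : X (n - 1) ⁻¹' {z : ℤ | 1 ≤ z} = {ω | 1 ≤ X (n - 1) ω} := rfl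
    have he2 : X 0 ⁻¹' {z : ℤ | 1 ≤ z} = {ω | 1 ≤ X 0 ω} := rfl
    rw [he1, he2] at this
    rw [this]
    exact pos_up hmeas hneg hint hmean
  rw [hD0, hindepE] at hkey
  rcases mul_eq_zero.1 hkey with h | h
  · exact absurd h (ne_of_gt hpos)
  · rw [← hEP]
    exact h

end RecordAux

/-- Zero-mean phase for i.i.d. skip-free increments: almost surely (i) every integer has
infinitely many ancestors in the record graph, (ii) the record graph is connected, and
(iii) every integer has finitely many descendants. -/
theorem record_graph_zero_mean
    {Ω : Type*} [MeasureSpace Ω] [IsProbabilityMeasure (ℙ : Measure Ω)]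
    (X : ℤ → Ω → ℤ) (hmeas : ∀ n, Measurable (X n))
    (hindep : iIndepFun X ℙ)
    (hident : ∀ n, IdentDistrib (X n) (X 0) ℙ ℙ)
    (hskip : ∀ᵐ ω ∂ℙ, -1 ≤ X 0 ω)
    (hneg : 0 < ℙ {ω | X 0 ω = -1})
    (hint : Integrable (fun ω => (X 0 ω : ℝ)) ℙ)
    (hmean : ∫ ω, (X 0 ω : ℝ) ∂ℙ = 0) :
    ∀ᵐ ω ∂ℙ,
      (∀ i : ℤ, ∀ n : ℕ,
        (recordMap (fun l => X l ω))^[n] i < (recordMap (fun l => X l ω))^[n + 1] i) ∧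
      (∀ i j : ℤ, ∃ n m : ℕ,
        (recordMap (fun l => X l ω))^[n] i = (recordMap (fun l => X l ω))^[m] j) ∧
      (∀ i : ℤ,
        {j : ℤ | j < i ∧ ∃ m : ℕ, 1 ≤ m ∧ (recordMap (fun l => X l ω))^[m] j = i}.Finite) := by
  have hfwd_ae : ∀ᵐ ω ∂ℙ, RecordAux.Hfwd (fun l => X l ω) := by
    have : ∀ᵐ ω ∂ℙ, ∀ n : ℤ, ∃ j : ℤ, n < j ∧ 0 ≤ ∑ l ∈ Finset.Ico n j, X l ω := by
      rw [ae_all_iff]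
      intro n
      rw [ae_iff]
      have h1 : {ω | ¬ ∃ j : ℤ, n < j ∧ 0 ≤ ∑ l ∈ Finset.Ico n j, X l ω}
          = {ω | ∀ j : ℤ, n < j → ∑ l ∈ Finset.Ico n j, X l ω < 0} := by
        ext ω
        simp only [Set.mem_setOf_eq, not_exists, not_and, not_le]
      rw [h1]
      exact RecordAux.fwd hmeas hindep hident hint hmean n
    filter_upwards [this] with ω hω
    exact hω
  have hbwd_ae : ∀ᵐ ω ∂ℙ, RecordAux.Hbwd (fun l => X l ω) := by
    have : ∀ᵐ ω ∂ℙ, ∀ n : ℤ, ∃ l : ℤ, l < n ∧ ∑ l' ∈ Finset.Ico l n, X l' ω < 0 := by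
      rw [ae_all_iff]
      intro n
      rw [ae_iff]
      have h1 : {ω | ¬ ∃ l : ℤ, l < n ∧ ∑ l' ∈ Finset.Ico l n, X l' ω < 0}
          = {ω | ∀ l : ℤ, l < n → 0 ≤ ∑ l' ∈ Finset.Ico l n, X l' ω} := by
        ext ω
        simp only [Set.mem_setOf_eq, not_exists, not_and, not_lt]
      rw [h1]
      exact RecordAux.bwd hmeas hindep hident hneg hint hmean n
    filter_upwards [this] with ω hω
    exact hω
  filter_upwards [hfwd_ae, hbwd_ae] with ω h1 h2
  exact RecordAux.det_main h1 h2
end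

section
/- Suppose E[X_0] < 0. Then almost surely the record component of 0, namely the set {j ∈ ℤ : R_X^a(j) = R_X^b(0) for some a, b ≥ 0}, is finite. -/
attribute [local instance] Classical.propDecidable

open MeasureTheory ProbabilityTheory Filter

lemma sum_Ico_consec (f : ℤ → ℤ) {m n k : ℤ} (h1 : m ≤ n) (h2 : n ≤ k) :
    ∑ l ∈ Finset.Ico m n, f l + ∑ l ∈ Finset.Ico n k, f l = ∑ l ∈ Finset.Ico m k, f l := by
  rw [← Finset.sum_union (Finset.Ico_disjoint_Ico_consecutive m n k),
    Finset.Ico_union_Ico_eq_Ico h1 h2]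

lemma sum_Ico_one (f : ℤ → ℤ) (n : ℤ) : ∑ l ∈ Finset.Ico n (n+1), f l = f n := by
  have : Finset.Ico n (n+1) = {n} := by
    ext m; simp only [Finset.mem_Ico, Finset.mem_singleton]; omega
  rw [this, Finset.sum_singleton]

lemma recordMap_step (x : ℤ → ℤ) (n : ℤ) :
    n ≤ recordMap x n ∧ 0 ≤ ∑ l ∈ Finset.Ico n (recordMap x n), x l := by
  unfold recordMap
  split_ifs with h
  · have hmem : sInf {j : ℤ | n < j ∧ 0 ≤ ∑ l ∈ Finset.Ico n j, x l}
        ∈ {j : ℤ | n < j ∧ 0 ≤ ∑ l ∈ Finset.Ico n j, x l} := by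
      apply Int.csInf_mem
      · exact h
      · exact ⟨n, fun z hz => le_of_lt hz.1⟩
    exact ⟨le_of_lt hmem.1, hmem.2⟩
  · simp

lemma recordMap_iter (x : ℤ → ℤ) (a : ℕ) (j : ℤ) :
    j ≤ (recordMap x)^[a] j ∧ 0 ≤ ∑ l ∈ Finset.Ico j ((recordMap x)^[a] j), x l := by
  induction a with
  | zero => simp
  | succ a ih =>
    rw [Function.iterate_succ_apply']
    set m := (recordMap x)^[a] j with hm
    obtain ⟨h1, h2⟩ := ih
    obtain ⟨h3, h4⟩ := recordMap_step x m
    refine ⟨le_trans h1 h3, ?_⟩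
    rw [← sum_Ico_consec x h1 h3]
    exact add_nonneg h2 h4

/-- Deterministic core: if forward and backward sums tend to `-∞`, the record
component of `0` is finite. -/
lemma record_component_finite_det (x : ℤ → ℤ)
    (h1 : ∀ C : ℤ, ∃ N : ℕ, ∀ n ≥ N, ∑ l ∈ Finset.Ico (0:ℤ) (n:ℤ), x l < C)
    (h2 : ∀ C : ℤ, ∃ M : ℕ, ∀ n ≥ M, ∑ l ∈ Finset.Ico (-(n:ℤ)) (0:ℤ), x l < C) :
    {j : ℤ | ∃ a b : ℕ, (recordMap x)^[a] j = (recordMap x)^[b] 0}.Finite := by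
  obtain ⟨N, hN⟩ := h1 0
  -- every element of the orbit of 0 is in [0, N)
  have horb : ∀ b : ℕ, 0 ≤ (recordMap x)^[b] 0 ∧ (recordMap x)^[b] 0 < (N:ℤ) := by
    intro b
    obtain ⟨hb1, hb2⟩ := recordMap_iter x b 0
    refine ⟨hb1, ?_⟩
    by_contra hlt
    push_neg at hlt
    have ht : ((recordMap x)^[b] 0).toNat ≥ N := by omega
    have := hN _ ht
    rw [Int.toNat_of_nonneg hb1] at this
    omega
  -- bound for partial sums at orbit points
  set B : ℤ := ∑ t ∈ Finset.Ico (0:ℤ) (N:ℤ), |∑ l ∈ Finset.Ico (0:ℤ) t, x l| with hB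
  have hBbound : ∀ t : ℤ, 0 ≤ t → t < (N:ℤ) → ∑ l ∈ Finset.Ico (0:ℤ) t, x l ≤ B := by
    intro t ht1 ht2
    calc ∑ l ∈ Finset.Ico (0:ℤ) t, x l ≤ |∑ l ∈ Finset.Ico (0:ℤ) t, x l| := le_abs_self _
    _ ≤ B := by
        apply Finset.single_le_sum (f := fun t => |∑ l ∈ Finset.Ico (0:ℤ) t, x l|)
        · intro i _; exact abs_nonneg _
        · simp [Finset.mem_Ico, ht1, ht2]
  obtain ⟨M, hM⟩ := h2 (-B)
  apply Set.Finite.subset (Set.finite_Icc (-(M:ℤ)) (N:ℤ))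
  rintro j ⟨a, b, hab⟩
  obtain ⟨hj1, hj2⟩ := recordMap_iter x a j
  obtain ⟨ht0, htN⟩ := horb b
  rw [hab] at hj1 hj2
  set t := (recordMap x)^[b] 0 with hT
  constructor
  · -- lower bound
    by_contra hlow
    push_neg at hlow
    have hj0 : j ≤ 0 := by omega
    have hsplit : ∑ l ∈ Finset.Ico j t, x l
        = ∑ l ∈ Finset.Ico j (0:ℤ), x l + ∑ l ∈ Finset.Ico (0:ℤ) t, x l :=
      (sum_Ico_consec _ hj0 ht0).symm
    have hMn : (-j).toNat ≥ M := by omega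
    have := hM _ hMn
    have hcast : (-((-j).toNat : ℤ)) = j := by omega
    rw [hcast] at this
    have := hBbound t ht0 htN
    omega
  · exact le_trans hj1 (le_of_lt htN)

/-- Reindexing: sums over `Ico 0 n` in `ℤ` as sums over `range n`. -/
lemma sum_Ico_int_eq_range (f : ℤ → ℤ) (n : ℕ) :
    ∑ l ∈ Finset.Ico (0:ℤ) (n:ℤ), f l = ∑ i ∈ Finset.range n, f (i:ℤ) := by
  induction n with
  | zero => simp
  | succ n ih =>
    rw [Finset.sum_range_succ, ← ih]
    have : ((n+1 : ℕ) : ℤ) = (n:ℤ)+1 := by push_cast; ring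
    rw [this, ← sum_Ico_consec f (by positivity : (0:ℤ) ≤ (n:ℤ)) (by omega : (n:ℤ) ≤ (n:ℤ)+1),
      sum_Ico_one]

/-- Reindexing for the backward walk. -/
lemma sum_Ico_neg_eq_range (f : ℤ → ℤ) (n : ℕ) :
    ∑ l ∈ Finset.Ico (-(n:ℤ)) (0:ℤ), f l = ∑ i ∈ Finset.range n, f (-(i:ℤ)-1) := by
  induction n with
  | zero => simp
  | succ n ih =>
    rw [Finset.sum_range_succ, ← ih]
    have e : (-((n+1 : ℕ) : ℤ)) = (-(n:ℤ)-1) := by push_cast; ring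
    rw [e, ← sum_Ico_consec f (by omega : (-(n:ℤ)-1) ≤ -(n:ℤ)) (by omega : (-(n:ℤ)) ≤ 0),
      add_comm]
    congr 1
    have := sum_Ico_one f (-(n:ℤ)-1)
    rw [show (-(n:ℤ)-1) + 1 = -(n:ℤ) from by ring] at this
    exact this

/-- From the strong law conclusion, integer partial sums are eventually below any bound. -/
lemma sums_eventually_lt {s : ℕ → ℤ} {μ : ℝ} (hμ : μ < 0)
    (h : Filter.Tendsto (fun n : ℕ => ((s n : ℝ)) / n) atTop (nhds μ)) :
    ∀ C : ℤ, ∃ N : ℕ, ∀ n ≥ N, s n < C := by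
  have hn : Tendsto (fun n : ℕ => (n:ℝ)) atTop atTop := tendsto_natCast_atTop_atTop
  have hmul : Tendsto (fun n : ℕ => (n:ℝ) * ((s n : ℝ) / n)) atTop atBot :=
    hn.atTop_mul_neg hμ h
  have hev : ∀ᶠ n : ℕ in atTop, (n:ℝ) * ((s n : ℝ) / n) = (s n : ℝ) := by
    filter_upwards [eventually_gt_atTop 0] with n hn0
    field_simp
  have hbot : Tendsto (fun n : ℕ => ((s n : ℝ))) atTop atBot := hmul.congr' hev
  intro C
  have := hbot.eventually_lt_atBot (C : ℝ)
  obtain ⟨N, hN⟩ := eventually_atTop.mp this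
  exact ⟨N, fun n hn' => by exact_mod_cast hN n hn'⟩

/-- Negative-mean phase for i.i.d. skip-free increments: almost surely the record
component of `0` is finite. -/
theorem record_component_finite_neg_mean
    {Ω : Type*} [MeasureSpace Ω] [IsProbabilityMeasure (ℙ : Measure Ω)]
    (X : ℤ → Ω → ℤ) (hmeas : ∀ n, Measurable (X n))
    (hindep : iIndepFun X ℙ)
    (hident : ∀ n, IdentDistrib (X n) (X 0) ℙ ℙ)
    (hskip : ∀ᵐ ω ∂ℙ, -1 ≤ X 0 ω)
    (hneg : 0 < ℙ {ω | X 0 ω = -1})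
    (hint : Integrable (fun ω => (X 0 ω : ℝ)) ℙ)
    (hmean : ∫ ω, (X 0 ω : ℝ) ∂ℙ < 0) :
    ∀ᵐ ω ∂ℙ,
      {j : ℤ | ∃ a b : ℕ,
        (recordMap (fun l => X l ω))^[a] j = (recordMap (fun l => X l ω))^[b] 0}.Finite := by
  have mcast : Measurable (fun z : ℤ => (z : ℝ)) := Measurable.of_discrete
  -- forward sequence
  set Y : ℕ → Ω → ℝ := fun i ω => (X (i:ℤ) ω : ℝ) with hY
  set Z : ℕ → Ω → ℝ := fun i ω => (X (-(i:ℤ)-1) ω : ℝ) with hZ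
  have hidY : ∀ i, IdentDistrib (Y i) (Y 0) ℙ ℙ := by
    intro i
    have := ((hident (i:ℤ)).trans (hident 0).symm).comp mcast
    exact this
  have hidZ : ∀ i, IdentDistrib (Z i) (Y 0) ℙ ℙ := by
    intro i
    have := ((hident (-(i:ℤ)-1)).trans (hident 0).symm).comp mcast
    exact this
  have hintY : Integrable (Y 0) ℙ := by simpa [hY] using hint
  have hindY : Pairwise (Function.onFun (IndepFun · · ℙ) Y) := by
    intro i j hij
    have : ((i:ℤ)) ≠ ((j:ℤ)) := by exact_mod_cast hij
    exact (hindep.indepFun this).comp mcast mcast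
  have hindZ : Pairwise (Function.onFun (IndepFun · · ℙ) Z) := by
    intro i j hij
    have : (-(i:ℤ)-1) ≠ (-(j:ℤ)-1) := by omega
    exact (hindep.indepFun this).comp mcast mcast
  have hintZ : Integrable (Z 0) ℙ := (hidZ 0).symm.integrable_snd hintY
  have hidZ' : ∀ i, IdentDistrib (Z i) (Z 0) ℙ ℙ := fun i => (hidZ i).trans (hidZ 0).symm
  have hmeanY : (ℙ[Y 0]) = ∫ ω, (X 0 ω : ℝ) ∂ℙ := by simp [hY]
  have hmeanZ : (ℙ[Z 0]) = ∫ ω, (X 0 ω : ℝ) ∂ℙ := by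
    rw [← hmeanY]; exact (hidZ 0).integral_eq
  have hsllnY := strong_law_ae_real Y hintY hindY hidY
  have hsllnZ := strong_law_ae_real Z hintZ hindZ hidZ'
  filter_upwards [hsllnY, hsllnZ] with ω hωY hωZ
  apply record_component_finite_det
  · -- forward sums go to -infty
    have hcongr : ∀ n : ℕ, ∑ i ∈ Finset.range n, Y i ω
        = ((∑ l ∈ Finset.Ico (0:ℤ) (n:ℤ), X l ω : ℤ) : ℝ) := by
      intro n
      rw [sum_Ico_int_eq_range (fun l => X l ω) n]
      push_cast
      rfl
    apply sums_eventually_lt (μ := ℙ[Y 0]) (by rw [hmeanY]; exact hmean)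
    convert hωY using 2 with n
    rw [hcongr n]
  · have hcongr : ∀ n : ℕ, ∑ i ∈ Finset.range n, Z i ω
        = ((∑ l ∈ Finset.Ico (-(n:ℤ)) (0:ℤ), X l ω : ℤ) : ℝ) := by
      intro n
      rw [sum_Ico_neg_eq_range (fun l => X l ω) n]
      push_cast
      rfl
    apply sums_eventually_lt (μ := ℙ[Z 0]) (by rw [hmeanZ]; exact hmean)
    convert hωZ using 2 with n
    rw [hcongr n]
end

section
/- Suppose 0 < E[X_0] < ∞. Then almost surely the following hold simultaneously: (i) R_X^{n+1}(0) > R_X^n(0) for all n ≥ 0 (0 has infinitely many ancestors in the record graph); (ii) there exists u ∈ ℤ whose set of descendants {j < u : R_X^m(j) = u for some m ≥ 1} is infinite; (iii) for all i, j ∈ ℤ there exist n, m ≥ 0 with R_X^n(i) = R_X^m(j) (the record graph is connected). -/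
attribute [local instance] Classical.propDecidable

open MeasureTheory ProbabilityTheory

/-! ### Deterministic preliminaries -/

/-- The two-sided partial sum function associated to `x`. -/
noncomputable def pSum (x : ℤ → ℤ) (n : ℤ) : ℤ :=
  ∑ l ∈ Finset.Ico 0 n, x l - ∑ l ∈ Finset.Ico n 0, x l

lemma sum_Ico_split (x : ℤ → ℤ) {a b c : ℤ} (hab : a ≤ b) (hbc : b ≤ c) :
    ∑ l ∈ Finset.Ico a b, x l + ∑ l ∈ Finset.Ico b c, x l = ∑ l ∈ Finset.Ico a c, x l := by
  rw [← Finset.sum_union (Finset.Ico_disjoint_Ico_consecutive a b c),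
    Finset.Ico_union_Ico_eq_Ico hab hbc]

lemma sum_Ico_eq_pSum (x : ℤ → ℤ) {n j : ℤ} (h : n ≤ j) :
    ∑ l ∈ Finset.Ico n j, x l = pSum x j - pSum x n := by
  unfold pSum
  rcases le_or_gt 0 n with h0 | h0
  · have e1 : Finset.Ico n (0:ℤ) = ∅ := Finset.Ico_eq_empty (by omega)
    have e2 : Finset.Ico j (0:ℤ) = ∅ := Finset.Ico_eq_empty (by omega)
    rw [e1, e2]
    have := sum_Ico_split x h0 h
    simp only [Finset.sum_empty]
    linarith
  · rcases le_or_gt 0 j with h1 | h1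
    · have e1 : Finset.Ico (0:ℤ) n = ∅ := Finset.Ico_eq_empty (by omega)
      have e2 : Finset.Ico j (0:ℤ) = ∅ := Finset.Ico_eq_empty (by omega)
      rw [e1, e2]
      have := sum_Ico_split x h0.le h1
      simp only [Finset.sum_empty]
      linarith
    · have e1 : Finset.Ico (0:ℤ) n = ∅ := Finset.Ico_eq_empty (by omega)
      have e2 : Finset.Ico (0:ℤ) j = ∅ := Finset.Ico_eq_empty (by omega)
      rw [e1, e2]
      have := sum_Ico_split x h h1.le
      simp only [Finset.sum_empty]
      linarith

section Det

variable {x : ℤ → ℤ}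

/-- Under the hypothesis that records always exist, basic properties of the record map. -/
lemma recordMap_spec (hA : ∀ n : ℤ, ∃ t, n < t ∧ pSum x n ≤ pSum x t) (n : ℤ) :
    n < recordMap x n ∧ pSum x n ≤ pSum x (recordMap x n) ∧
      ∀ l, n < l → pSum x n ≤ pSum x l → recordMap x n ≤ l := by
  have hmem : ∀ l : ℤ, (n < l ∧ 0 ≤ ∑ i ∈ Finset.Ico n l, x i) ↔
      (n < l ∧ pSum x n ≤ pSum x l) := by
    intro l
    constructor
    · rintro ⟨h1, h2⟩
      rw [sum_Ico_eq_pSum x h1.le] at h2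
      exact ⟨h1, by linarith⟩
    · rintro ⟨h1, h2⟩
      refine ⟨h1, ?_⟩
      rw [sum_Ico_eq_pSum x h1.le]
      linarith
  obtain ⟨t, ht1, ht2⟩ := hA n
  have hne : ∃ j : ℤ, n < j ∧ 0 ≤ ∑ l ∈ Finset.Ico n j, x l := ⟨t, (hmem t).2 ⟨ht1, ht2⟩⟩
  rw [recordMap, if_pos hne]
  set s : Set ℤ := {j : ℤ | n < j ∧ 0 ≤ ∑ l ∈ Finset.Ico n j, x l} with hs
  have hsne : s.Nonempty := hne
  have hbdd : BddBelow s := ⟨n, fun j hj => hj.1.le⟩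
  have hmem' := Int.csInf_mem hsne hbdd
  obtain ⟨h1, h2⟩ := (hmem _).1 hmem'
  refine ⟨h1, h2, fun l hl1 hl2 => csInf_le hbdd ((hmem l).2 ⟨hl1, hl2⟩)⟩

/-- Iterates of the record map: monotone growth and running-maximum property. -/
lemma recordMap_iterate (hA : ∀ n : ℤ, ∃ t, n < t ∧ pSum x n ≤ pSum x t) (i : ℤ) (n : ℕ) :
    i + n ≤ (recordMap x)^[n] i ∧
      ∀ l, i ≤ l → l < (recordMap x)^[n] i → pSum x l ≤ pSum x ((recordMap x)^[n] i) := by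
  induction n with
  | zero => exact ⟨by simp, fun l h1 h2 => absurd (h1.trans_lt (by simpa using h2)) (lt_irrefl _)⟩
  | succ n ih =>
    obtain ⟨hle, hmax⟩ := ih
    set t := (recordMap x)^[n] i with ht
    have hit : (recordMap x)^[n + 1] i = recordMap x t := by
      rw [Function.iterate_succ_apply']
    obtain ⟨h1, h2, h3⟩ := recordMap_spec hA t
    rw [hit]
    constructor
    · push_cast; omega
    · intro l hl1 hl2
      rcases lt_trichotomy l t with h | h | h
      · exact (hmax l hl1 h).trans h2
      · rw [h]; exact h2
      · by_contra hcon
        have : pSum x t ≤ pSum x l := by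
          by_contra hc2
          exact hcon ((le_of_not_ge hc2).trans h2)
        exact absurd (h3 l h this) (by omega)

/-- Orbit lemma: if `S l ≤ S t` on `[j, t)`, then the record orbit of `j` passes through `t`. -/
lemma recordMap_orbit (hA : ∀ n : ℤ, ∃ t, n < t ∧ pSum x n ≤ pSum x t) :
    ∀ (k : ℕ) (j t : ℤ), j ≤ t → t - j ≤ k →
      (∀ l, j ≤ l → l < t → pSum x l ≤ pSum x t) →
      ∃ m : ℕ, (recordMap x)^[m] j = t ∧ (j < t → 1 ≤ m) := by
  intro k
  induction k with
  | zero =>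
    intro j t hjt hk _
    have : j = t := by omega
    exact ⟨0, by simp [this], by omega⟩
  | succ k ih =>
    intro j t hjt hk hmax
    rcases eq_or_lt_of_le hjt with heq | hlt
    · exact ⟨0, by simp [heq], by omega⟩
    · obtain ⟨h1, _, h3⟩ := recordMap_spec hA j
      set j' := recordMap x j with hj'
      have hj't : j' ≤ t := h3 t hlt (hmax j le_rfl hlt)
      have hmax' : ∀ l, j' ≤ l → l < t → pSum x l ≤ pSum x t := fun l hl1 hl2 =>
        hmax l (by omega) hl2
      obtain ⟨m, hm, _⟩ := ih j' t hj't (by omega) hmax'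
      exact ⟨m + 1, by rw [Function.iterate_succ_apply]; exact hm, fun _ => by omega⟩

/-- The deterministic core of the theorem. -/
theorem record_det (x : ℤ → ℤ)
    (hA : ∀ n : ℤ, ∃ t, n < t ∧ pSum x n ≤ pSum x t)
    (hB : ∃ u : ℤ, ∀ l, l < u → pSum x l ≤ pSum x u) :
    (∀ n : ℕ, (recordMap x)^[n] 0 < (recordMap x)^[n + 1] 0) ∧
      (∃ u : ℤ, {j : ℤ | j < u ∧ ∃ m : ℕ, 1 ≤ m ∧ (recordMap x)^[m] j = u}.Infinite) ∧
      (∀ i j : ℤ, ∃ n m : ℕ, (recordMap x)^[n] i = (recordMap x)^[m] j) := by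
  have key : ∀ i j : ℤ, i ≤ j → ∃ n m : ℕ, (recordMap x)^[n] i = (recordMap x)^[m] j := by
    intro i j hij
    set n := (j - i).toNat with hn
    obtain ⟨hle, hmax⟩ := recordMap_iterate hA i n
    set t := (recordMap x)^[n] i with ht
    have hjt : j ≤ t := by omega
    obtain ⟨m, hm, _⟩ := recordMap_orbit hA (t - j).toNat j t hjt (by omega)
      (fun l hl1 hl2 => hmax l (by omega) hl2)
    exact ⟨n, m, by rw [hm]⟩
  refine ⟨?_, ?_, ?_⟩
  · intro n
    rw [Function.iterate_succ_apply']
    exact (recordMap_spec hA _).1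
  · obtain ⟨u, hu⟩ := hB
    refine ⟨u, Set.Infinite.mono ?_ (Set.Iio_infinite u)⟩
    intro j hj
    obtain ⟨m, hm1, hm2⟩ := recordMap_orbit hA (u - j).toNat j u (le_of_lt hj) (by omega)
      (fun l _ hl2 => hu l hl2)
    exact ⟨hj, m, hm2 hj, hm1⟩
  · intro i j
    rcases le_total i j with h | h
    · exact key i j h
    · obtain ⟨n, m, hnm⟩ := key j i h
      exact ⟨m, n, hnm.symm⟩

end Det

/-! ### Cast lemmas for partial sums -/

lemma sum_Ico_natCast (x : ℤ → ℤ) (n : ℕ) :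
    ∑ l ∈ Finset.Ico (0:ℤ) (n:ℤ), x l = ∑ i ∈ Finset.range n, x i := by
  induction n with
  | zero => simp
  | succ n ih =>
    have h : ((n + 1 : ℕ) : ℤ) = (n : ℤ) + 1 := by push_cast; ring
    have hs : Finset.Ico ((n:ℤ)) ((n:ℤ)+1) = {(n:ℤ)} := by ext l; simp [Finset.mem_Ico]; omega
    rw [h, ← sum_Ico_split x (by positivity : (0:ℤ) ≤ (n:ℤ)) (by omega : (n:ℤ) ≤ (n:ℤ) + 1),
      ih, hs, Finset.sum_singleton, Finset.sum_range_succ]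

lemma sum_Ico_neg_natCast (x : ℤ → ℤ) (n : ℕ) :
    ∑ l ∈ Finset.Ico (-(n:ℤ)) 0, x l = ∑ i ∈ Finset.range n, x (-(i : ℤ) - 1) := by
  induction n with
  | zero => simp
  | succ n ih =>
    have h : (-((n + 1 : ℕ) : ℤ)) = (-(n:ℤ) - 1) := by push_cast; ring
    have hs : Finset.Ico (-(n:ℤ) - 1) (-(n:ℤ)) = {-(n:ℤ) - 1} := by
      ext l; simp [Finset.mem_Ico]; omega
    rw [h, ← sum_Ico_split x (by omega : (-(n:ℤ) - 1) ≤ -(n:ℤ)) (by omega : -(n:ℤ) ≤ 0), ih,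
      hs, Finset.sum_singleton, Finset.sum_range_succ]
    ring

lemma pSum_natCast (x : ℤ → ℤ) (n : ℕ) : pSum x (n : ℤ) = ∑ i ∈ Finset.range n, x i := by
  have e : Finset.Ico ((n : ℤ)) 0 = ∅ := Finset.Ico_eq_empty (by omega)
  rw [pSum, e, Finset.sum_empty, sub_zero, sum_Ico_natCast]

lemma pSum_neg_natCast (x : ℤ → ℤ) (n : ℕ) :
    pSum x (-(n : ℤ)) = -∑ i ∈ Finset.range n, x (-(i : ℤ) - 1) := by
  have e : Finset.Ico (0 : ℤ) (-(n:ℤ)) = ∅ := Finset.Ico_eq_empty (by omega)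
  rw [pSum, e, Finset.sum_empty, zero_sub, neg_inj, sum_Ico_neg_natCast]

/-! ### A consequence of the law of large numbers -/

lemma tendsto_sum_of_avg {s : ℕ → ℝ} {c : ℝ}
    (h : Filter.Tendsto (fun n : ℕ => s n / n) Filter.atTop (nhds c)) (hc : 0 < c) :
    Filter.Tendsto s Filter.atTop Filter.atTop := by
  have h1 : Filter.Tendsto (fun n : ℕ => (n : ℝ) * (c / 2)) Filter.atTop Filter.atTop :=
    Filter.Tendsto.atTop_mul_const (by linarith) tendsto_natCast_atTop_atTop
  apply Filter.tendsto_atTop_mono' Filter.atTop ?_ h1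
  filter_upwards [h.eventually (eventually_ge_nhds (show c / 2 < c by linarith)),
    Filter.eventually_ge_atTop 1] with n hn hn1
  have hn0 : (0 : ℝ) < n := by exact_mod_cast hn1
  calc (n : ℝ) * (c / 2) ≤ n * (s n / n) := by
        exact mul_le_mul_of_nonneg_left hn hn0.le
    _ = s n := by field_simp

/-- Positive-mean phase for i.i.d. skip-free increments: almost surely (i) `0` has
infinitely many ancestors in the record graph, (ii) some integer has infinitely many
descendants, and (iii) the record graph is connected. -/
theorem record_graph_positive_mean
    {Ω : Type*} [MeasureSpace Ω] [IsProbabilityMeasure (ℙ : Measure Ω)]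
    (X : ℤ → Ω → ℤ) (hmeas : ∀ n, Measurable (X n))
    (hindep : iIndepFun X ℙ)
    (hident : ∀ n, IdentDistrib (X n) (X 0) ℙ ℙ)
    (hskip : ∀ᵐ ω ∂ℙ, -1 ≤ X 0 ω)
    (hneg : 0 < ℙ {ω | X 0 ω = -1})
    (hint : Integrable (fun ω => (X 0 ω : ℝ)) ℙ)
    (hmean : 0 < ∫ ω, (X 0 ω : ℝ) ∂ℙ) :
    ∀ᵐ ω ∂ℙ,
      (∀ n : ℕ,
        (recordMap (fun l => X l ω))^[n] 0 < (recordMap (fun l => X l ω))^[n + 1] 0) ∧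
      (∃ u : ℤ,
        {j : ℤ | j < u ∧ ∃ m : ℕ, 1 ≤ m ∧ (recordMap (fun l => X l ω))^[m] j = u}.Infinite) ∧
      (∀ i j : ℤ, ∃ n m : ℕ,
        (recordMap (fun l => X l ω))^[n] i = (recordMap (fun l => X l ω))^[m] j) := by
  classical
  have castMeas : Measurable (fun z : ℤ => (z : ℝ)) := measurable_from_top
  set Y : ℕ → Ω → ℝ := fun i ω => (X (i : ℤ) ω : ℝ) with hY
  set Z : ℕ → Ω → ℝ := fun i ω => (X (-(i : ℤ) - 1) ω : ℝ) with hZ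
  have hY0 : Y 0 = fun ω => (X 0 ω : ℝ) := by
    funext ω; simp [hY]
  -- forward strong law
  have hYint : Integrable (Y 0) ℙ := by rw [hY0]; exact hint
  have hYindep : Pairwise (Function.onFun (IndepFun · · ℙ) Y) := by
    intro i j hij
    have hij' : (i : ℤ) ≠ (j : ℤ) := by exact_mod_cast hij
    exact (hindep.indepFun hij').comp castMeas castMeas
  have hYident : ∀ i, IdentDistrib (Y i) (Y 0) ℙ ℙ := by
    intro i
    rw [hY0]
    exact (hident (i : ℤ)).comp castMeas
  have law1 := strong_law_ae_real Y hYint hYindep hYident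
  have hEY : (ℙ : Measure Ω)[Y 0] = ∫ ω, (X 0 ω : ℝ) ∂ℙ := by rw [hY0]
  -- backward strong law
  have hZid : ∀ i : ℕ, IdentDistrib (Z i) (fun ω => (X 0 ω : ℝ)) ℙ ℙ := fun i =>
    (hident (-(i : ℤ) - 1)).comp castMeas
  have hZint : Integrable (Z 0) ℙ := by
    rw [(hZid 0).integrable_iff]; exact hint
  have hZindep : Pairwise (Function.onFun (IndepFun · · ℙ) Z) := by
    intro i j hij
    have hij' : (-(i : ℤ) - 1) ≠ (-(j : ℤ) - 1) := by
      intro hcon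
      apply hij
      have : (i : ℤ) = (j : ℤ) := by omega
      exact_mod_cast this
    exact (hindep.indepFun hij').comp castMeas castMeas
  have hZident : ∀ i, IdentDistrib (Z i) (Z 0) ℙ ℙ := fun i => (hZid i).trans (hZid 0).symm
  have law2 := strong_law_ae_real Z hZint hZindep hZident
  have hEZ : (ℙ : Measure Ω)[Z 0] = ∫ ω, (X 0 ω : ℝ) ∂ℙ := (hZid 0).integral_eq
  -- combine
  filter_upwards [law1, law2] with ω h1 h2
  set x : ℤ → ℤ := fun l => X l ω with hx
  -- identify the sums
  have e1 : ∀ n : ℕ, ((pSum x (n : ℤ) : ℤ) : ℝ) = ∑ i ∈ Finset.range n, Y i ω := by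
    intro n
    rw [pSum_natCast]
    push_cast
    rfl
  have e2 : ∀ n : ℕ, ((pSum x (-(n : ℤ)) : ℤ) : ℝ) = -∑ i ∈ Finset.range n, Z i ω := by
    intro n
    rw [pSum_neg_natCast]
    push_cast
    rfl
  rw [hEY] at h1
  rw [hEZ] at h2
  have hs1 : Filter.Tendsto (fun n : ℕ => ∑ i ∈ Finset.range n, Y i ω)
      Filter.atTop Filter.atTop := tendsto_sum_of_avg h1 hmean
  have hs2 : Filter.Tendsto (fun n : ℕ => ∑ i ∈ Finset.range n, Z i ω)
      Filter.atTop Filter.atTop := tendsto_sum_of_avg h2 hmean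
  have htop : Filter.Tendsto (fun n : ℕ => pSum x (n : ℤ)) Filter.atTop Filter.atTop := by
    rw [Filter.tendsto_atTop]
    intro b
    filter_upwards [hs1.eventually_ge_atTop (b : ℝ)] with n hn
    rw [← e1] at hn
    exact_mod_cast hn
  have hbot : Filter.Tendsto (fun n : ℕ => pSum x (-(n : ℤ))) Filter.atTop Filter.atBot := by
    rw [Filter.tendsto_atBot]
    intro b
    filter_upwards [hs2.eventually_ge_atTop (-(b : ℝ))] with n hn
    have : ((pSum x (-(n : ℤ)) : ℤ) : ℝ) ≤ (b : ℝ) := by rw [e2]; linarith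
    exact_mod_cast this
  -- hypothesis A : records always exist
  have hA : ∀ n : ℤ, ∃ t, n < t ∧ pSum x n ≤ pSum x t := by
    intro n
    obtain ⟨k, hk1, hk2⟩ :=
      ((htop.eventually_ge_atTop (pSum x n)).and (Filter.eventually_ge_atTop
        (n.toNat + 1))).exists
    exact ⟨(k : ℤ), by omega, hk1⟩
  -- hypothesis B : a global weak maximum over the past exists
  have hB : ∃ u : ℤ, ∀ l, l < u → pSum x l ≤ pSum x u := by
    obtain ⟨K, hK⟩ := Filter.eventually_atTop.1 (hbot.eventually_le_atBot 0)
    obtain ⟨b, hbmem, hble⟩ := Finset.exists_max_image (Finset.range (K + 1))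
      (fun k : ℕ => pSum x (-(k : ℤ))) ⟨0, by simp⟩
    set C : ℤ := max 0 (pSum x (-(b : ℤ))) with hC
    have hCle : ∀ l : ℤ, l ≤ 0 → pSum x l ≤ C := by
      intro l hl
      have hlk : l = -(((-l).toNat : ℕ) : ℤ) := by omega
      rcases le_or_gt K ((-l).toNat) with h | h
      · rw [hlk]
        exact (hK _ h).trans (le_max_left _ _)
      · rw [hlk]
        exact (hble _ (Finset.mem_range.2 (by omega))).trans (le_max_right _ _)
    obtain ⟨N, hN⟩ := (htop.eventually_ge_atTop (C + 1)).exists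
    obtain ⟨u, humem, hule⟩ := Finset.exists_max_image (Finset.Icc (0 : ℤ) (N : ℤ))
      (pSum x) ⟨0, by simp⟩
    refine ⟨u, fun l hl => ?_⟩
    rcases lt_or_ge l 0 with h | h
    · have h1 : pSum x l ≤ C := hCle l h.le
      have h2 : pSum x (N : ℤ) ≤ pSum x u := hule _ (by simp)
      omega
    · have hlu : l ∈ Finset.Icc (0 : ℤ) (N : ℤ) := by
        rw [Finset.mem_Icc]
        have := Finset.mem_Icc.1 humem
        omega
      exact hule l hlu
  exact record_det x hA hB
end

section
/- Let (X_n)_{n∈ℤ} be a stationary integer-valued sequence with E[|X_0|] < ∞. If almost surely R_X^{n+1}(0) > R_X^n(0) for all n ≥ 0 (0 has infinitely many ancestors in the record graph), then almost surely for all i, j ∈ ℤ there exist n, m ≥ 0 with R_X^n(i) = R_X^m(j) (the record graph is connected). -/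
/-!
Stationarity transports the almost sure event `0 < R_X(0)` to every site `k`, so almost surely
`k < R_X(k)` for all `k` and every trajectory of `R_X` increases to `+∞`. If `p ≤ q < R_X(p)`,
the partial sum from `p` to `q` is negative, so `R_X(p)` is also a record candidate for `q` and
`R_X(q) ≤ R_X(p)`. Hence once the trajectory of `j` enters `[p, R_X(p))`, its next step lands
exactly on `R_X(p)`; applying this to the step of the trajectory of `i ≤ j` that jumps over `j`
merges the two trajectories.
-/

attribute [local instance] Classical.propDecidable

open Finset MeasureTheory ProbabilityTheory

theorem Int.exists_iterate_le_lt_iterate_succ {f : ℤ → ℤ} (hf : ∀ k, k < f k) {a b : ℤ}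
    (hab : a ≤ b) : ∃ n : ℕ, f^[n] a ≤ b ∧ b < f (f^[n] a) := by
  induction hd : (b - a).toNat using Nat.strong_induction_on generalizing a with
  | _ d ih =>
    by_cases hb : b < f a
    · exact ⟨0, hab, hb⟩
    · obtain ⟨n, hn⟩ := ih (b - f a).toNat (by have := hf a; omega) (not_lt.1 hb) rfl
      exact ⟨n + 1, hn⟩

section RecordMap

variable {x : ℤ → ℤ} {n i j p : ℤ}

theorem recordMap_spec_s13 (h : ∃ j, n < j ∧ 0 ≤ ∑ l ∈ Ico n j, x l) :
    n < recordMap x n ∧ 0 ≤ ∑ l ∈ Ico n (recordMap x n), x l := by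
  rw [recordMap, if_pos h]
  exact Int.csInf_mem h ⟨n, fun _ hj => hj.1.le⟩

theorem recordMap_le (hj : n < j) (hsum : 0 ≤ ∑ l ∈ Ico n j, x l) : recordMap x n ≤ j := by
  rw [recordMap, if_pos ⟨j, hj, hsum⟩]
  exact csInf_le ⟨n, fun _ hk => hk.1.le⟩ ⟨hj, hsum⟩

theorem lt_recordMap_iff : n < recordMap x n ↔ ∃ j, n < j ∧ 0 ≤ ∑ l ∈ Ico n j, x l := by
  refine ⟨fun h => ?_, fun h => (recordMap_spec_s13 h).1⟩
  by_contra hne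
  rw [recordMap, if_neg hne] at h
  exact h.false

theorem recordMap_le_recordMap (hip : i ≤ p) (hp : p < recordMap x i) :
    recordMap x p ≤ recordMap x i := by
  obtain rfl | hip := hip.eq_or_lt
  · rfl
  have hi := recordMap_spec_s13 (lt_recordMap_iff.1 (hip.trans hp))
  have hneg : ∑ l ∈ Ico i p, x l < 0 := by
    by_contra! hsum
    exact hp.not_ge (recordMap_le hip hsum)
  have hsplit : ∑ l ∈ Ico i p, x l + ∑ l ∈ Ico p (recordMap x i), x l =
      ∑ l ∈ Ico i (recordMap x i), x l := by
    rw [← sum_union (Ico_disjoint_Ico_consecutive _ _ _), Ico_union_Ico_eq_Ico hip.le hp.le]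
  exact recordMap_le hp (by omega)

theorem recordMap_connected_of_le (hx : ∀ k, k < recordMap x k) (hij : i ≤ j) :
    ∃ n m : ℕ, (recordMap x)^[n] i = (recordMap x)^[m] j := by
  obtain ⟨n, hi_le, hi_lt⟩ := Int.exists_iterate_le_lt_iterate_succ hx hij
  obtain ⟨m, hj_le, hj_lt⟩ := Int.exists_iterate_le_lt_iterate_succ hx
    (show j ≤ recordMap x ((recordMap x)^[n] i) - 1 by omega)
  have hj_iter : j ≤ (recordMap x)^[m] j :=
    Function.id_le_iterate_of_id_le (fun k => (hx k).le) m j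
  have hmerge : recordMap x ((recordMap x)^[m] j) ≤ recordMap x ((recordMap x)^[n] i) :=
    recordMap_le_recordMap (hi_le.trans hj_iter) (by omega)
  exact ⟨n + 1, m + 1, by simp only [Function.iterate_succ_apply']; omega⟩

theorem recordMap_connected (hx : ∀ k, k < recordMap x k) (i j : ℤ) :
    ∃ n m : ℕ, (recordMap x)^[n] i = (recordMap x)^[m] j := by
  rcases le_total i j with hij | hji
  · exact recordMap_connected_of_le hx hij
  · obtain ⟨n, m, h⟩ := recordMap_connected_of_le hx hji
    exact ⟨m, n, h.symm⟩

end RecordMap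

theorem measurableSet_exists_nonneg_sum_Ico :
    MeasurableSet {x : ℤ → ℤ | ∃ j, 0 < j ∧ 0 ≤ ∑ l ∈ Ico 0 j, x l} := by
  measurability

theorem exists_nonneg_sum_Ico_shift_iff (x : ℤ → ℤ) (k : ℤ) :
    (∃ j, 0 < j ∧ 0 ≤ ∑ l ∈ Ico 0 j, x (l + k)) ↔ ∃ j, k < j ∧ 0 ≤ ∑ l ∈ Ico k j, x l := by
  simp only [sum_Ico_add', zero_add]
  constructor
  · rintro ⟨j, hj, hsum⟩
    exact ⟨j + k, by omega, hsum⟩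
  · rintro ⟨j, hj, hsum⟩
    exact ⟨j - k, by omega, by simpa using hsum⟩

theorem stationary_record_graph_connected_general
    {Ω : Type*} [MeasureSpace Ω]
    (X : ℤ → Ω → ℤ) (hmeas : ∀ n, Measurable (X n))
    (hstat : ∀ k : ℤ, Measure.map (fun ω => fun n : ℤ => X (n + k) ω) ℙ =
      Measure.map (fun ω => fun n : ℤ => X n ω) ℙ)
    (hanc : ∀ᵐ ω ∂ℙ, ∀ n : ℕ,
      (recordMap (fun l => X l ω))^[n] 0 < (recordMap (fun l => X l ω))^[n + 1] 0) :
    ∀ᵐ ω ∂ℙ, ∀ i j : ℤ, ∃ n m : ℕ,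
      (recordMap (fun l => X l ω))^[n] i = (recordMap (fun l => X l ω))^[m] j := by
  have hzero : ∀ᵐ ω ∂ℙ, ∃ j, 0 < j ∧ 0 ≤ ∑ l ∈ Ico 0 j, X l ω :=
    hanc.mono fun ω h => lt_recordMap_iff.1 (h 0)
  have hshift : ∀ k : ℤ, ∀ᵐ ω ∂ℙ, ∃ j, k < j ∧ 0 ≤ ∑ l ∈ Ico k j, X l ω := by
    intro k
    have hid : IdentDistrib (fun ω => fun n : ℤ => X n ω) (fun ω => fun n : ℤ => X (n + k) ω)
        ℙ ℙ :=
      ⟨(measurable_pi_lambda _ hmeas).aemeasurable,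
        (measurable_pi_lambda _ fun n => hmeas (n + k)).aemeasurable, (hstat k).symm⟩
    filter_upwards [hid.ae_mem_snd measurableSet_exists_nonneg_sum_Ico hzero] with ω hω
    exact (exists_nonneg_sum_Ico_shift_iff (fun l => X l ω) k).1 hω
  filter_upwards [ae_all_iff.2 hshift] with ω hω
  exact recordMap_connected fun k => lt_recordMap_iff.2 (hω k)

/-- For a stationary integrable integer sequence: if almost surely `0` has infinitely
many ancestors in the record graph, then almost surely the record graph is connected. -/
theorem stationary_record_graph_connected
    {Ω : Type*} [MeasureSpace Ω] [IsProbabilityMeasure (ℙ : Measure Ω)]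
    (X : ℤ → Ω → ℤ) (hmeas : ∀ n, Measurable (X n))
    (hstat : ∀ k : ℤ, Measure.map (fun ω => fun n : ℤ => X (n + k) ω) ℙ =
      Measure.map (fun ω => fun n : ℤ => X n ω) ℙ)
    (hint : Integrable (fun ω => (X 0 ω : ℝ)) ℙ)
    (hanc : ∀ᵐ ω ∂ℙ, ∀ n : ℕ,
      (recordMap (fun l => X l ω))^[n] 0 < (recordMap (fun l => X l ω))^[n + 1] 0) :
    ∀ᵐ ω ∂ℙ, ∀ i j : ℤ, ∃ n m : ℕ,
      (recordMap (fun l => X l ω))^[n] i = (recordMap (fun l => X l ω))^[m] j :=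
  stationary_record_graph_connected_general X hmeas hstat hanc
end

section
/- Let (X_n)_{n∈ℤ} be a stationary and ergodic integer-valued sequence with E[|X_0|] < ∞, and let C(0) = {j ∈ ℤ : R_X^a(j) = R_X^b(0) for some a, b ≥ 0} be the record component of 0. Then each of the following events has probability 0 or 1: (a) C(0) is infinite and every v ∈ C(0) has a finite set of descendants (C(0) is of class I/I); (b) C(0) is infinite and some v ∈ C(0) has an infinite set of descendants (C(0) is of class I/F); (c) C(0) is finite (C(0) is of class F/F). -/
attribute [local instance] Classical.propDecidable

namespace RecordAux

/-- `m` is a peak: all partial sums to the right are negative. -/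
def IsPeak (x : ℤ → ℤ) (m : ℤ) : Prop := ∀ j, m < j → ∑ l ∈ Finset.Ico m j, x l < 0

/-- `v` is a record: all partial sums from the left are nonnegative. -/
def IsRcd (x : ℤ → ℤ) (v : ℤ) : Prop := ∀ l, l < v → 0 ≤ ∑ m ∈ Finset.Ico l v, x m

lemma sum_Ico_split (x : ℤ → ℤ) {a b c : ℤ} (h1 : a ≤ b) (h2 : b ≤ c) :
    (∑ m ∈ Finset.Ico a b, x m) + ∑ m ∈ Finset.Ico b c, x m = ∑ m ∈ Finset.Ico a c, x m := by
  rw [← Finset.sum_union (Finset.Ico_disjoint_Ico_consecutive a b c),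
    Finset.Ico_union_Ico_eq_Ico h1 h2]

variable {x : ℤ → ℤ}

lemma not_peak_iff {m : ℤ} :
    ¬ IsPeak x m ↔ ∃ j, m < j ∧ 0 ≤ ∑ l ∈ Finset.Ico m j, x l := by
  unfold IsPeak; push_neg; simp [not_lt]

lemma recordMap_eq_self_of_peak {m : ℤ} (h : IsPeak x m) : recordMap x m = m := by
  rw [recordMap, if_neg]
  exact fun hc => (not_peak_iff.mpr hc) h

lemma recordMap_spec {n : ℤ} (h : ¬ IsPeak x n) :
    n < recordMap x n ∧ 0 ≤ ∑ l ∈ Finset.Ico n (recordMap x n), x l ∧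
      ∀ k, n < k → 0 ≤ ∑ l ∈ Finset.Ico n k, x l → recordMap x n ≤ k := by
  rw [not_peak_iff] at h
  rw [recordMap, if_pos h]
  have hbdd : BddBelow {j : ℤ | n < j ∧ 0 ≤ ∑ l ∈ Finset.Ico n j, x l} :=
    ⟨n, fun j hj => hj.1.le⟩
  have hmem := Int.csInf_mem (s := {j : ℤ | n < j ∧ 0 ≤ ∑ l ∈ Finset.Ico n j, x l}) h hbdd
  exact ⟨hmem.1, hmem.2, fun k hk hk' => csInf_le hbdd ⟨hk, hk'⟩⟩

lemma le_recordMap (n : ℤ) : n ≤ recordMap x n := by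
  by_cases h : IsPeak x n
  · rw [recordMap_eq_self_of_peak h]
  · exact (recordMap_spec h).1.le

lemma lt_recordMap {n : ℤ} (h : ¬ IsPeak x n) : n < recordMap x n := (recordMap_spec h).1

lemma le_iterate_s15 (j : ℤ) : ∀ a : ℕ, j ≤ (recordMap x)^[a] j
  | 0 => le_refl j
  | (a+1) => by
      rw [Function.iterate_succ_apply']
      exact (le_iterate_s15 j a).trans (le_recordMap _)

lemma exists_iterate_eq {j t : ℤ} (hjt : j ≤ t)
    (h : ∀ l, j ≤ l → l < t → 0 ≤ ∑ m ∈ Finset.Ico l t, x m) :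
    ∃ a, (recordMap x)^[a] j = t := by
  have key : ∀ N : ℕ, ∀ j, j ≤ t → (t - j).toNat ≤ N →
      (∀ l, j ≤ l → l < t → 0 ≤ ∑ m ∈ Finset.Ico l t, x m) →
      ∃ a, (recordMap x)^[a] j = t := by
    intro N
    induction N with
    | zero =>
      intro j hj hN _
      have : j = t := by omega
      exact ⟨0, this⟩
    | succ N ih =>
      intro j hj hN h
      rcases eq_or_lt_of_le hj with rfl | hlt
      · exact ⟨0, rfl⟩
      have hnp : ¬ IsPeak x j := not_peak_iff.mpr ⟨t, hlt, h j le_rfl hlt⟩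
      obtain ⟨h1, _, h3⟩ := recordMap_spec hnp
      have hRle : recordMap x j ≤ t := h3 t hlt (h j le_rfl hlt)
      obtain ⟨a, ha⟩ := ih (recordMap x j) hRle (by omega)
        (fun l hl hl' => h l ((h1.le).trans hl) hl')
      exact ⟨a + 1, by rw [Function.iterate_succ_apply]; exact ha⟩
  exact key (t - j).toNat j hjt le_rfl h

lemma sum_nonneg_of_iterate_eq :
    ∀ (a : ℕ) {j l t : ℤ}, (recordMap x)^[a] j = t → j ≤ l → l < t →
      0 ≤ ∑ m ∈ Finset.Ico l t, x m := by
  intro a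
  induction a with
  | zero =>
    intro j l t h hjl hlt
    simp only [Function.iterate_zero_apply] at h
    omega
  | succ a ih =>
    intro j l t h hjl hlt
    rw [Function.iterate_succ_apply] at h
    by_cases hp : IsPeak x j
    · rw [recordMap_eq_self_of_peak hp] at h
      exact ih h hjl hlt
    · obtain ⟨h1, h2, h3⟩ := recordMap_spec hp
      set k := recordMap x j with hk
      have hkt : k ≤ t := h ▸ le_iterate_s15 k a
      have hkt_sum : 0 ≤ ∑ m ∈ Finset.Ico k t, x m := by
        rcases eq_or_lt_of_le hkt with rfl | hlt'
        · simp
        · exact ih h le_rfl hlt'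
      rcases lt_or_ge l k with hlk | hkl
      · have hsplit : (∑ m ∈ Finset.Ico l k, x m) + ∑ m ∈ Finset.Ico k t, x m
            = ∑ m ∈ Finset.Ico l t, x m := sum_Ico_split x hlk.le hkt
        have hlk_sum : 0 ≤ ∑ m ∈ Finset.Ico l k, x m := by
          rcases eq_or_lt_of_le hjl with rfl | hjl'
          · exact h2
          · have hneg : ∑ m ∈ Finset.Ico j l, x m < 0 := by
              by_contra hc
              push_neg at hc
              exact absurd (h3 l hjl' hc) (by omega)
            have hsp : (∑ m ∈ Finset.Ico j l, x m) + ∑ m ∈ Finset.Ico l k, x m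
                = ∑ m ∈ Finset.Ico j k, x m := sum_Ico_split x hjl'.le hlk.le
            linarith
        linarith
      · exact ih h hkl hlt

lemma rcd_recordMap {v : ℤ} (hr : IsRcd x v) (hp : ¬ IsPeak x v) :
    IsRcd x (recordMap x v) := by
  obtain ⟨h1, h2, h3⟩ := recordMap_spec hp
  set k := recordMap x v with hk
  intro l hl
  rcases lt_trichotomy l v with h | rfl | h
  · have hsp : (∑ m ∈ Finset.Ico l v, x m) + ∑ m ∈ Finset.Ico v k, x m
        = ∑ m ∈ Finset.Ico l k, x m := sum_Ico_split x h.le h1.le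
    have := hr l h
    linarith
  · exact h2
  · have hneg : ∑ m ∈ Finset.Ico v l, x m < 0 := by
      by_contra hc
      push_neg at hc
      exact absurd (h3 l h hc) (by omega)
    have hsp : (∑ m ∈ Finset.Ico v l, x m) + ∑ m ∈ Finset.Ico l k, x m
        = ∑ m ∈ Finset.Ico v k, x m := sum_Ico_split x h.le hl.le
    linarith

lemma C_infinite (hnp : ∀ m, ¬ IsPeak x m) :
    {j : ℤ | ∃ a b : ℕ, (recordMap x)^[a] j = (recordMap x)^[b] 0}.Infinite := by
  apply Set.infinite_of_injective_forall_mem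
    (f := fun b : ℕ => (recordMap x)^[b] (0 : ℤ))
  · exact (strictMono_nat_of_lt_succ (fun b => by
      rw [Function.iterate_succ_apply']
      exact lt_recordMap (hnp _))).injective
  · exact fun b => ⟨0, b, rfl⟩

lemma D_finite_of_not_rcd {v : ℤ} (h : ¬ IsRcd x v) :
    {j : ℤ | j ≠ v ∧ ∃ m : ℕ, 1 ≤ m ∧ (recordMap x)^[m] j = v}.Finite := by
  obtain ⟨l0, hl0v, hneg⟩ : ∃ l0, l0 < v ∧ ∑ m ∈ Finset.Ico l0 v, x m < 0 := by
    unfold IsRcd at h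
    push_neg at h
    simpa [not_le] using h
  apply Set.Finite.subset (Set.finite_Ioo l0 v)
  rintro j ⟨hj, m, _, hmv⟩
  have hjv : j ≤ v := hmv ▸ le_iterate_s15 j m
  have hjv' : j < v := lt_of_le_of_ne hjv hj
  refine ⟨?_, hjv'⟩
  by_contra hc
  push_neg at hc
  exact absurd (sum_nonneg_of_iterate_eq m hmv hc hl0v) (by omega)

lemma exists_big_rcd (hnp : ∀ m, ¬ IsPeak x m) {v : ℤ} (hv : IsRcd x v) (N : ℤ) :
    ∃ w, N ≤ w ∧ IsRcd x w := by
  have key : ∀ a : ℕ, IsRcd x ((recordMap x)^[a] v) ∧ v + a ≤ (recordMap x)^[a] v := by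
    intro a
    induction a with
    | zero => simpa using hv
    | succ a ih =>
      rw [Function.iterate_succ_apply']
      refine ⟨rcd_recordMap ih.1 (hnp _), ?_⟩
      have h1 := lt_recordMap (x := x) (hnp ((recordMap x)^[a] v))
      have h2 := ih.2
      push_cast
      omega
  refine ⟨(recordMap x)^[(N - v).toNat] v, ?_, (key _).1⟩
  have := (key (N - v).toNat).2
  omega

lemma mem_C_of_rcd_pos {w : ℤ} (hw : IsRcd x w) (hw0 : 0 ≤ w) :
    ∃ a b : ℕ, (recordMap x)^[a] w = (recordMap x)^[b] 0 := by
  obtain ⟨b, hb⟩ := exists_iterate_eq hw0 (fun l _ hl' => hw l hl')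
  exact ⟨0, b, by simp [hb]⟩

lemma D_infinite_of_rcd {w : ℤ} (hw : IsRcd x w) :
    {j : ℤ | j ≠ w ∧ ∃ m : ℕ, 1 ≤ m ∧ (recordMap x)^[m] j = w}.Infinite := by
  refine (Set.Iio_infinite w).mono ?_
  intro j (hj : j < w)
  obtain ⟨a, ha⟩ := exists_iterate_eq hj.le (fun l _ hl' => hw l hl')
  have ha0 : a ≠ 0 := by
    rintro rfl
    simp only [Function.iterate_zero_apply] at ha
    omega
  exact ⟨hj.ne, a, Nat.one_le_iff_ne_zero.mpr ha0, ha⟩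

lemma rcd_le_peak {v m : ℤ} (hv : IsRcd x v) (hm : IsPeak x m) : v ≤ m := by
  by_contra h
  push_neg at h
  have h1 := hv m h
  have h2 := hm v h
  omega

lemma C_finite_of_peak {m : ℤ} (hm : IsPeak x m) (hm0 : 0 ≤ m)
    (hnr : ∀ v, ¬ IsRcd x v) :
    {j : ℤ | ∃ a b : ℕ, (recordMap x)^[a] j = (recordMap x)^[b] 0}.Finite := by
  have hb : ∀ b : ℕ, (recordMap x)^[b] 0 ≤ m := by
    intro b
    induction b with
    | zero => simpa using hm0
    | succ b ih =>
      rw [Function.iterate_succ_apply']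
      set n := (recordMap x)^[b] (0 : ℤ) with hn
      by_cases hp : IsPeak x n
      · rw [recordMap_eq_self_of_peak hp]; exact ih
      · obtain ⟨h1, h2, h3⟩ := recordMap_spec hp
        by_contra hc
        push_neg at hc
        have hnm : n < m := by
          rcases eq_or_lt_of_le ih with rfl | hlt
          · exact absurd hm hp
          · exact hlt
        apply hp
        intro j hj
        rcases le_or_gt j m with hjm | hmj
        · by_contra hge
          push_neg at hge
          have := h3 j hj hge
          omega
        · have hs1 : ∑ l ∈ Finset.Ico n m, x l < 0 := by
            by_contra hge
            push_neg at hge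
            have := h3 m hnm hge
            omega
          have hs2 := hm j hmj
          have hsp : (∑ l ∈ Finset.Ico n m, x l) + ∑ l ∈ Finset.Ico m j, x l
              = ∑ l ∈ Finset.Ico n j, x l := sum_Ico_split x hnm.le hmj.le
          linarith
  have hstab : ∃ b : ℕ, recordMap x ((recordMap x)^[b] 0) = (recordMap x)^[b] 0 := by
    by_contra hc
    push_neg at hc
    have hgrow : ∀ b : ℕ, (b : ℤ) ≤ (recordMap x)^[b] 0 := by
      intro b
      induction b with
      | zero => simp
      | succ b ih =>
        rw [Function.iterate_succ_apply']
        have h1 : (recordMap x)^[b] (0:ℤ) < recordMap x ((recordMap x)^[b] 0) :=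
          lt_of_le_of_ne (le_recordMap _) (Ne.symm (hc b))
        push_cast
        omega
    have h1 := hgrow (m + 1).toNat
    have h2 := hb (m + 1).toNat
    omega
  obtain ⟨b0, hb0⟩ := hstab
  set m' := (recordMap x)^[b0] (0 : ℤ) with hm'
  have hfix : ∀ d : ℕ, (recordMap x)^[d] m' = m' := by
    intro d
    induction d with
    | zero => rfl
    | succ d ih => rw [Function.iterate_succ_apply', ih]; exact hb0
  obtain ⟨l0, hl0, hneg⟩ : ∃ l0, l0 < m' ∧ ∑ l ∈ Finset.Ico l0 m', x l < 0 := by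
    have h := hnr m'
    unfold IsRcd at h
    push_neg at h
    simpa [not_le] using h
  apply Set.Finite.subset (Set.finite_Ioc l0 m')
  rintro j ⟨a, b, hab⟩
  have hreach : (recordMap x)^[b0 + a] j = m' := by
    rw [Function.iterate_add_apply, hab, ← Function.iterate_add_apply]
    -- (recordMap x)^[b0 + b] 0 = m'
    rw [show b0 + b = b + b0 from by omega, Function.iterate_add_apply, ← hm', hfix b]
  have hjm : j ≤ m' := hreach ▸ le_iterate_s15 j (b0 + a)
  refine ⟨?_, hjm⟩
  rcases eq_or_lt_of_le hjm with rfl | hjm'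
  · exact hl0
  · by_contra hc
    push_neg at hc
    exact absurd (sum_nonneg_of_iterate_eq (b0 + a) hreach hc hl0) (by omega)


lemma sum_shift (f : ℤ → ℤ) (a b : ℤ) :
    ∑ l ∈ Finset.Ico a b, f (l + 1) = ∑ l ∈ Finset.Ico (a + 1) (b + 1), f l := by
  rw [← Finset.map_add_right_Ico a b 1, Finset.sum_map]
  simp [addRightEmbedding_apply]

lemma isPeak_shift (f : ℤ → ℤ) (m : ℤ) :
    IsPeak (fun n => f (n + 1)) m ↔ IsPeak f (m + 1) := by
  constructor
  · intro h j hj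
    have h2 := h (j - 1) (by omega)
    rw [sum_shift] at h2
    have e : j - 1 + 1 = j := by omega
    rwa [e] at h2
  · intro h j hj
    rw [sum_shift]
    exact h (j + 1) (by omega)

lemma isRcd_shift (f : ℤ → ℤ) (v : ℤ) :
    IsRcd (fun n => f (n + 1)) v ↔ IsRcd f (v + 1) := by
  constructor
  · intro h l hl
    have h2 := h (l - 1) (by omega)
    rw [sum_shift] at h2
    have e : l - 1 + 1 = l := by omega
    rwa [e] at h2
  · intro h l hl
    rw [sum_shift]
    exact h (l + 1) (by omega)

end RecordAux
open MeasureTheory ProbabilityTheory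

open RecordAux

/-- For a stationary and ergodic integrable integer sequence, each of the events "the
record component of `0` is of class I/I", "… of class I/F", "… of class F/F" has
probability `0` or `1`. -/
theorem record_component_class_zero_one
    {Ω : Type*} [MeasureSpace Ω] [IsProbabilityMeasure (ℙ : Measure Ω)]
    (X : ℤ → Ω → ℤ) (hmeas : ∀ n, Measurable (X n))
    (hstat : ∀ k : ℤ, Measure.map (fun ω => fun n : ℤ => X (n + k) ω) ℙ =
      Measure.map (fun ω => fun n : ℤ => X n ω) ℙ)
    (herg : ∀ A : Set (ℤ → ℤ), MeasurableSet A →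
      (fun f : ℤ → ℤ => fun n : ℤ => f (n + 1)) ⁻¹' A = A →
      Measure.map (fun ω => fun n : ℤ => X n ω) ℙ A = 0 ∨
        Measure.map (fun ω => fun n : ℤ => X n ω) ℙ A = 1)
    (hint : Integrable (fun ω => (X 0 ω : ℝ)) ℙ)
    (C : Ω → Set ℤ)
    (hC : ∀ ω, C ω = {j : ℤ | ∃ a b : ℕ,
      (recordMap (fun l => X l ω))^[a] j = (recordMap (fun l => X l ω))^[b] 0})
    (D : ℤ → Ω → Set ℤ)
    (hD : ∀ v ω, D v ω = {j : ℤ | j ≠ v ∧ ∃ m : ℕ, 1 ≤ m ∧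
      (recordMap (fun l => X l ω))^[m] j = v}) :
    (ℙ {ω | (C ω).Infinite ∧ ∀ v ∈ C ω, (D v ω).Finite} = 0 ∨
      ℙ {ω | (C ω).Infinite ∧ ∀ v ∈ C ω, (D v ω).Finite} = 1) ∧
    (ℙ {ω | (C ω).Infinite ∧ ∃ v ∈ C ω, (D v ω).Infinite} = 0 ∨
      ℙ {ω | (C ω).Infinite ∧ ∃ v ∈ C ω, (D v ω).Infinite} = 1) ∧
    (ℙ {ω | (C ω).Finite} = 0 ∨ ℙ {ω | (C ω).Finite} = 1) := by
  classical
  set φ : Ω → (ℤ → ℤ) := fun ω => fun n : ℤ => X n ω with hφdef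
  have hφ : Measurable φ := measurable_pi_lambda _ hmeas
  set ν : Measure (ℤ → ℤ) := Measure.map φ ℙ with hν
  haveI hνprob : IsProbabilityMeasure ν := Measure.isProbabilityMeasure_map hφ.aemeasurable
  set σm : (ℤ → ℤ) → (ℤ → ℤ) := fun f => fun n : ℤ => f (n + 1) with hσdef
  have hσ : Measurable σm := measurable_pi_lambda _ fun n => measurable_pi_apply _
  have hσν : Measure.map σm ν = ν := by
    rw [hν, Measure.map_map hσ hφ]
    exact hstat 1
  have hsum_meas : ∀ a b : ℤ, Measurable (fun f : ℤ → ℤ => ∑ l ∈ Finset.Ico a b, f l) :=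
    fun a b => Finset.measurable_sum _ (fun i _ => measurable_pi_apply i)
  -- measurability of peak/record sets
  have hpk_meas : ∀ m : ℤ, MeasurableSet {f : ℤ → ℤ | IsPeak f m} := by
    intro m
    have he : {f : ℤ → ℤ | IsPeak f m} =
        ⋂ j : ℤ, {f : ℤ → ℤ | m < j → ∑ l ∈ Finset.Ico m j, f l < 0} := by
      ext f; simp [IsPeak, Set.mem_iInter]
    rw [he]
    refine MeasurableSet.iInter fun j => ?_
    by_cases hj : m < j
    · simp only [hj, true_implies]
      exact measurableSet_lt (hsum_meas m j) measurable_const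
    · simp [hj]
  have hrc_meas : ∀ v : ℤ, MeasurableSet {f : ℤ → ℤ | IsRcd f v} := by
    intro v
    have he : {f : ℤ → ℤ | IsRcd f v} =
        ⋂ l : ℤ, {f : ℤ → ℤ | l < v → 0 ≤ ∑ m ∈ Finset.Ico l v, f m} := by
      ext f; simp [IsRcd, Set.mem_iInter]
    rw [he]
    refine MeasurableSet.iInter fun l => ?_
    by_cases hl : l < v
    · simp only [hl, true_implies]
      exact measurableSet_le measurable_const (hsum_meas l v)
    · simp [hl]
  -- the basic events
  set Apk : Set (ℤ → ℤ) := {f | ∃ m, IsPeak f m} with hApkdef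
  set Arc : Set (ℤ → ℤ) := {f | ∃ v, IsRcd f v} with hArcdef
  set Qpk : Set (ℤ → ℤ) := {f | ∀ N : ℤ, ∃ m, N ≤ m ∧ IsPeak f m} with hQpkdef
  set Qrc : Set (ℤ → ℤ) := {f | ∀ N : ℤ, ∃ v, N ≤ v ∧ IsRcd f v} with hQrcdef
  have hApk_m : MeasurableSet Apk := by
    have : Apk = ⋃ m : ℤ, {f | IsPeak f m} := by ext f; simp [hApkdef]
    rw [this]; exact MeasurableSet.iUnion hpk_meas
  have hArc_m : MeasurableSet Arc := by
    have : Arc = ⋃ v : ℤ, {f | IsRcd f v} := by ext f; simp [hArcdef]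
    rw [this]; exact MeasurableSet.iUnion hrc_meas
  have hQpk_m : MeasurableSet Qpk := by
    have : Qpk = ⋂ N : ℤ, ⋃ m : ℤ, {f : ℤ → ℤ | N ≤ m ∧ IsPeak f m} := by
      ext f; simp [hQpkdef]
    rw [this]
    refine MeasurableSet.iInter fun N => MeasurableSet.iUnion fun m => ?_
    by_cases hm : N ≤ m
    · simp only [hm, true_and]; exact hpk_meas m
    · simp [hm]
  have hQrc_m : MeasurableSet Qrc := by
    have : Qrc = ⋂ N : ℤ, ⋃ v : ℤ, {f : ℤ → ℤ | N ≤ v ∧ IsRcd f v} := by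
      ext f; simp [hQrcdef]
    rw [this]
    refine MeasurableSet.iInter fun N => MeasurableSet.iUnion fun v => ?_
    by_cases hv : N ≤ v
    · simp only [hv, true_and]; exact hrc_meas v
    · simp [hv]
  -- invariance of Apk, Arc
  have hApk_inv : σm ⁻¹' Apk = Apk := by
    ext f
    simp only [Set.mem_preimage, hApkdef, Set.mem_setOf_eq]
    constructor
    · rintro ⟨m, hm⟩
      exact ⟨m + 1, (isPeak_shift f m).mp hm⟩
    · rintro ⟨m, hm⟩
      refine ⟨m - 1, (isPeak_shift f (m - 1)).mpr ?_⟩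
      have e : m - 1 + 1 = m := by omega
      rwa [e]
  have hArc_inv : σm ⁻¹' Arc = Arc := by
    ext f
    simp only [Set.mem_preimage, hArcdef, Set.mem_setOf_eq]
    constructor
    · rintro ⟨v, hv⟩
      exact ⟨v + 1, (isRcd_shift f v).mp hv⟩
    · rintro ⟨v, hv⟩
      refine ⟨v - 1, (isRcd_shift f (v - 1)).mpr ?_⟩
      have e : v - 1 + 1 = v := by omega
      rwa [e]
  -- the "last peak / last record" sets are null
  set Pk : ℤ → Set (ℤ → ℤ) := fun k => {f | IsPeak f k ∧ ∀ m, k < m → ¬ IsPeak f m}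
    with hPkdef
  set Rr : ℤ → Set (ℤ → ℤ) := fun k => {f | IsRcd f k ∧ ∀ v, k < v → ¬ IsRcd f v}
    with hRrdef
  have hPk_m : ∀ k, MeasurableSet (Pk k) := by
    intro k
    have : Pk k = {f | IsPeak f k} ∩ ⋂ m : ℤ, {f : ℤ → ℤ | k < m → ¬ IsPeak f m} := by
      ext f; simp [hPkdef]
    rw [this]
    refine (hpk_meas k).inter (MeasurableSet.iInter fun m => ?_)
    by_cases hm : k < m
    · simp only [hm, true_implies]; exact (hpk_meas m).compl
    · simp [hm]
  have hRr_m : ∀ k, MeasurableSet (Rr k) := by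
    intro k
    have : Rr k = {f | IsRcd f k} ∩ ⋂ v : ℤ, {f : ℤ → ℤ | k < v → ¬ IsRcd f v} := by
      ext f; simp [hRrdef]
    rw [this]
    refine (hrc_meas k).inter (MeasurableSet.iInter fun v => ?_)
    by_cases hv : k < v
    · simp only [hv, true_implies]; exact (hrc_meas v).compl
    · simp [hv]
  have hPk_shift : ∀ k, σm ⁻¹' Pk k = Pk (k + 1) := by
    intro k
    ext f
    simp only [Set.mem_preimage, hPkdef, Set.mem_setOf_eq]
    constructor
    · rintro ⟨h1, h2⟩
      refine ⟨(isPeak_shift f k).mp h1, fun m hm hp => ?_⟩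
      refine h2 (m - 1) (by omega) ?_
      refine (isPeak_shift f (m - 1)).mpr ?_
      have e : m - 1 + 1 = m := by omega
      rwa [e]
    · rintro ⟨h1, h2⟩
      refine ⟨(isPeak_shift f k).mpr h1, fun m hm hp => ?_⟩
      exact h2 (m + 1) (by omega) ((isPeak_shift f m).mp hp)
  have hRr_shift : ∀ k, σm ⁻¹' Rr k = Rr (k + 1) := by
    intro k
    ext f
    simp only [Set.mem_preimage, hRrdef, Set.mem_setOf_eq]
    constructor
    · rintro ⟨h1, h2⟩
      refine ⟨(isRcd_shift f k).mp h1, fun v hv hr => ?_⟩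
      refine h2 (v - 1) (by omega) ?_
      refine (isRcd_shift f (v - 1)).mpr ?_
      have e : v - 1 + 1 = v := by omega
      rwa [e]
    · rintro ⟨h1, h2⟩
      refine ⟨(isRcd_shift f k).mpr h1, fun v hv hr => ?_⟩
      exact h2 (v + 1) (by omega) ((isRcd_shift f v).mp hr)
  have hstep : ∀ (S : ℤ → Set (ℤ → ℤ)), (∀ k, MeasurableSet (S k)) →
      (∀ k, σm ⁻¹' S k = S (k + 1)) → ∀ k : ℤ, ν (S k) = ν (S 0) := by
    intro S hSm hSsh
    have h1 : ∀ k : ℤ, ν (S (k + 1)) = ν (S k) := by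
      intro k
      rw [← hSsh k, ← Measure.map_apply hσ (hSm k), hσν]
    intro k
    induction k using Int.induction_on with
    | zero => rfl
    | succ n ih => rw [h1 (n : ℤ), ih]
    | pred n ih =>
      have h2 := h1 (-(n : ℤ) - 1)
      have e : -(n : ℤ) - 1 + 1 = -(n : ℤ) := by ring
      rw [e] at h2
      rw [← h2]
      exact ih
  have hnull : ∀ (S : ℤ → Set (ℤ → ℤ)), (∀ k, MeasurableSet (S k)) →
      (∀ k, σm ⁻¹' S k = S (k + 1)) →
      (∀ k k' f, k < k' → f ∈ S k → f ∈ S k' → False) → ν (⋃ k, S k) = 0 := by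
    intro S hSm hSsh hdisj
    have hconst := hstep S hSm hSsh
    have hc0 : ν (S 0) = 0 := by
      by_contra hc
      have hpair : Pairwise (Function.onFun Disjoint S) := by
        intro k k' hkk'
        rw [Function.onFun, Set.disjoint_left]
        intro f hf hf'
        rcases lt_or_gt_of_ne hkk' with h | h
        · exact hdisj k k' f h hf hf'
        · exact hdisj k' k f h hf' hf
      have hU : ν (⋃ k, S k) = ∑' k : ℤ, ν (S k) := measure_iUnion hpair hSm
      have he : (∑' k : ℤ, ν (S k)) = ∑' _ : ℤ, ν (S 0) := tsum_congr fun k => hconst k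
      rw [he, ENNReal.tsum_const_eq_top_of_ne_zero hc] at hU
      have hle : ν (⋃ k, S k) ≤ 1 := prob_le_one
      rw [hU] at hle
      simp at hle
    exact measure_iUnion_null fun k => (hconst k).trans hc0
  have hPkU : ν (⋃ k, Pk k) = 0 := by
    refine hnull Pk hPk_m hPk_shift ?_
    intro k k' f hkk' hf hf'
    exact hf.2 k' hkk' hf'.1
  have hRrU : ν (⋃ k, Rr k) = 0 := by
    refine hnull Rr hRr_m hRr_shift ?_
    intro k k' f hkk' hf hf'
    exact hf.2 k' hkk' hf'.1
  have hApkQ : ν (Apk \ Qpk) = 0 := by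
    refine measure_mono_null ?_ hPkU
    rintro f ⟨⟨m, hm⟩, hnq⟩
    have hnq' : ∃ N : ℤ, ∀ m, N ≤ m → ¬ IsPeak f m := by
      by_contra hcon
      push_neg at hcon
      exact hnq fun N => hcon N
    obtain ⟨N, hN⟩ := hnq'
    obtain ⟨k, hk1, hk2⟩ := Int.exists_greatest_of_bdd (P := fun z => IsPeak f z)
      ⟨N, fun z hz => by by_contra hc; push_neg at hc; exact hN z (by omega) hz⟩ ⟨m, hm⟩
    exact Set.mem_iUnion.mpr ⟨k, hk1, fun m' hm' hp => absurd (hk2 m' hp) (by omega)⟩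
  have hArcQ : ν (Arc \ Qrc) = 0 := by
    refine measure_mono_null ?_ hRrU
    rintro f ⟨⟨v, hv⟩, hnq⟩
    have hnq' : ∃ N : ℤ, ∀ v, N ≤ v → ¬ IsRcd f v := by
      by_contra hcon
      push_neg at hcon
      exact hnq fun N => hcon N
    obtain ⟨N, hN⟩ := hnq'
    obtain ⟨k, hk1, hk2⟩ := Int.exists_greatest_of_bdd (P := fun z => IsRcd f z)
      ⟨N, fun z hz => by by_contra hc; push_neg at hc; exact hN z (by omega) hz⟩ ⟨v, hv⟩
    exact Set.mem_iUnion.mpr ⟨k, hk1, fun v' hv' hr => absurd (hk2 v' hr) (by omega)⟩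
  -- unbounded records are incompatible with any peak
  have hQrcApk : ∀ f, f ∈ Qrc → f ∈ Apk → False := by
    rintro f hq ⟨m, hm⟩
    obtain ⟨v, hv1, hv2⟩ := hq (m + 1)
    exact absurd (rcd_le_peak hv2 hm) (by omega)
  -- the null set
  set N0 : Set (ℤ → ℤ) := (Apk \ Qpk) ∪ (Arc \ Qrc) with hN0def
  have hN0_m : MeasurableSet N0 := ((hApk_m.diff hQpk_m).union (hArc_m.diff hQrc_m))
  have hN0 : ν N0 = 0 := measure_union_null hApkQ hArcQ
  -- the three invariant events
  set M1 : Set (ℤ → ℤ) := Apkᶜ ∩ Arcᶜ with hM1def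
  set M2 : Set (ℤ → ℤ) := Apkᶜ ∩ Arc with hM2def
  set M3 : Set (ℤ → ℤ) := Apk ∩ Arcᶜ with hM3def
  have hM1_m : MeasurableSet M1 := hApk_m.compl.inter hArc_m.compl
  have hM2_m : MeasurableSet M2 := hApk_m.compl.inter hArc_m
  have hM3_m : MeasurableSet M3 := hApk_m.inter hArc_m.compl
  have hM1_inv : σm ⁻¹' M1 = M1 := by
    rw [hM1def, Set.preimage_inter, Set.preimage_compl, Set.preimage_compl, hApk_inv, hArc_inv]
  have hM2_inv : σm ⁻¹' M2 = M2 := by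
    rw [hM2def, Set.preimage_inter, Set.preimage_compl, hApk_inv, hArc_inv]
  have hM3_inv : σm ⁻¹' M3 = M3 := by
    rw [hM3def, Set.preimage_inter, Set.preimage_compl, hApk_inv, hArc_inv]
  -- the target events
  set T1 : Set Ω := {ω | (C ω).Infinite ∧ ∀ v ∈ C ω, (D v ω).Finite} with hT1def
  set T2 : Set Ω := {ω | (C ω).Infinite ∧ ∃ v ∈ C ω, (D v ω).Infinite} with hT2def
  set T3 : Set Ω := {ω | (C ω).Finite} with hT3def
  -- pathwise inclusions
  have hM1T1 : ∀ ω, φ ω ∈ M1 → ω ∈ T1 := by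
    intro ω hω
    have hnp : ∀ m, ¬ IsPeak (φ ω) m := fun m hm => hω.1 ⟨m, hm⟩
    have hnr : ∀ v, ¬ IsRcd (φ ω) v := fun v hv => hω.2 ⟨v, hv⟩
    refine ⟨?_, ?_⟩
    · rw [hC]; exact C_infinite hnp
    · intro v _; rw [hD]; exact D_finite_of_not_rcd (hnr v)
  have hM2T2 : ∀ ω, φ ω ∈ M2 → ω ∈ T2 := by
    intro ω hω
    have hnp : ∀ m, ¬ IsPeak (φ ω) m := fun m hm => hω.1 ⟨m, hm⟩
    obtain ⟨v, hv⟩ := hω.2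
    obtain ⟨w, hw0, hw⟩ := exists_big_rcd hnp hv 0
    refine ⟨by rw [hC]; exact C_infinite hnp, w, ?_, ?_⟩
    · rw [hC]; exact mem_C_of_rcd_pos hw hw0
    · rw [hD]; exact D_infinite_of_rcd hw
  have hM3T3 : ∀ ω, φ ω ∈ M3 → φ ω ∉ N0 → ω ∈ T3 := by
    intro ω hω hn
    have hq : φ ω ∈ Qpk := by
      by_contra hq
      exact hn (Or.inl ⟨hω.1, hq⟩)
    obtain ⟨m, hm0, hm⟩ := hq 0
    have hnr : ∀ v, ¬ IsRcd (φ ω) v := fun v hv => hω.2 ⟨v, hv⟩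
    show (C ω).Finite
    rw [hC]
    exact C_finite_of_peak hm hm0 hnr
  -- coverage
  have hcover : ∀ f, f ∉ N0 → f ∈ M1 ∨ f ∈ M2 ∨ f ∈ M3 := by
    intro f hf
    by_cases hA : f ∈ Apk
    · by_cases hR : f ∈ Arc
      · exfalso
        have hq : f ∈ Qrc := by
          by_contra hq
          exact hf (Or.inr ⟨hR, hq⟩)
        exact hQrcApk f hq hA
      · exact Or.inr (Or.inr ⟨hA, hR⟩)
    · by_cases hR : f ∈ Arc
      · exact Or.inr (Or.inl ⟨hA, hR⟩)
      · exact Or.inl ⟨hA, hR⟩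
  -- disjointness of targets
  have hT12 : ∀ ω, ω ∈ T1 → ω ∈ T2 → False := by
    rintro ω h1 ⟨_, v, hv, hvinf⟩
    exact hvinf (h1.2 v hv)
  have hT13 : ∀ ω, ω ∈ T1 → ω ∈ T3 → False := fun ω h1 h3 => h1.1 h3
  have hT23 : ∀ ω, ω ∈ T2 → ω ∈ T3 → False := fun ω h2 h3 => h2.1 h3
  -- sandwich
  have key : ∀ (T : Set Ω) (M : Set (ℤ → ℤ)), MeasurableSet M →
      (∀ ω, φ ω ∈ M → φ ω ∉ N0 → ω ∈ T) →
      (∀ ω, ω ∈ T → φ ω ∉ N0 → φ ω ∈ M) → ℙ T = ν M := by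
    intro T M hMm hsub1 hsub2
    have hiN : ℙ (φ ⁻¹' N0) = 0 := by
      rw [hν] at hN0
      rw [← Measure.map_apply hφ hN0_m]
      exact hN0
    have hM : ℙ (φ ⁻¹' M) = ν M := by
      rw [hν, Measure.map_apply hφ hMm]
    apply le_antisymm
    · have hsub : T ⊆ (φ ⁻¹' M) ∪ (φ ⁻¹' N0) := by
        intro ω hω
        by_cases h : φ ω ∈ N0
        · exact Or.inr h
        · exact Or.inl (hsub2 ω hω h)
      calc ℙ T ≤ ℙ ((φ ⁻¹' M) ∪ (φ ⁻¹' N0)) := measure_mono hsub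
        _ ≤ ℙ (φ ⁻¹' M) + ℙ (φ ⁻¹' N0) := measure_union_le _ _
        _ = ν M := by rw [hM, hiN, add_zero]
    · have hsub : φ ⁻¹' M ⊆ T ∪ (φ ⁻¹' N0) := by
        intro ω hω
        by_cases h : φ ω ∈ N0
        · exact Or.inr h
        · exact Or.inl (hsub1 ω hω h)
      calc ν M = ℙ (φ ⁻¹' M) := hM.symm
        _ ≤ ℙ (T ∪ (φ ⁻¹' N0)) := measure_mono hsub
        _ ≤ ℙ T + ℙ (φ ⁻¹' N0) := measure_union_le _ _
        _ = ℙ T := by rw [hiN, add_zero]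
  have hkey1 : ℙ T1 = ν M1 := by
    refine key T1 M1 hM1_m (fun ω hω _ => hM1T1 ω hω) ?_
    intro ω hω hn
    rcases hcover (φ ω) hn with h | h | h
    · exact h
    · exact absurd (hM2T2 ω h) fun h2 => hT12 ω hω h2
    · exact absurd (hM3T3 ω h hn) fun h3 => hT13 ω hω h3
  have hkey2 : ℙ T2 = ν M2 := by
    refine key T2 M2 hM2_m (fun ω hω _ => hM2T2 ω hω) ?_
    intro ω hω hn
    rcases hcover (φ ω) hn with h | h | h
    · exact absurd (hM1T1 ω h) fun h1 => hT12 ω h1 hω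
    · exact h
    · exact absurd (hM3T3 ω h hn) fun h3 => hT23 ω hω h3
  have hkey3 : ℙ T3 = ν M3 := by
    refine key T3 M3 hM3_m (fun ω hω hn => hM3T3 ω hω hn) ?_
    intro ω hω hn
    rcases hcover (φ ω) hn with h | h | h
    · exact absurd (hM1T1 ω h) fun h1 => hT13 ω h1 hω
    · exact absurd (hM2T2 ω h) fun h2 => hT23 ω h2 hω
    · exact h
  refine ⟨?_, ?_, ?_⟩
  · rw [hkey1]
    exact herg M1 hM1_m hM1_inv
  · rw [hkey2]
    exact herg M2 hM2_m hM2_inv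
  · rw [hkey3]
    exact herg M3 hM3_m hM3_inv
end
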